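/- arXiv:1107.6027 — 10 statements merged into one kernel-verified Lean document; each statement's English description precedes it below -/
import Mathlib

section
/- For all q, q' ∈ [0,1], one has R̂(q';q) − R̂(q;q') ≤ (q − q')·(P₁(q') − P₀(q')) ≤ |q − q'|; in particular the risk function is locally Lipschitz in this symmetrized sense. -/
/-!
Expanding both risks, the first inequality is `R̂(q';q') ≤ R̂(q;q')`: the likelihood-ratio test
tuned to the prior `q'` is Bayes optimal for that prior, because its integrand
`min (q'·p₁) ((1-q')·p₀)` lies pointwise below that of any other threshold test. The second
inequality holds because `P₁(q')` and `P₀(q')` both lie in `[0, 1]`.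
-/

open MeasureTheory

noncomputable section

/-- `P₁(q')`: probability of deciding `H₀` under `H₁`, for the likelihood-ratio
threshold detector with prior `q'`. -/
def P1 (d : ℕ) (p₁ p₀ : (Fin d → ℝ) → ℝ) (q' : ℝ) : ℝ :=
  ∫ x, (if q' * p₁ x < (1 - q') * p₀ x then p₁ x else 0)

/-- `P₀(q')`: probability of deciding `H₁` under `H₀`. -/
def P0 (d : ℕ) (p₁ p₀ : (Fin d → ℝ) → ℝ) (q' : ℝ) : ℝ :=
  ∫ x, (if (1 - q') * p₀ x ≤ q' * p₁ x then p₀ x else 0)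

/-- The parametrized risk `R̂(q₁;q₂) = q₂·P₁(q₁) + (1−q₂)·P₀(q₁)`. -/
def Rhat (d : ℕ) (p₁ p₀ : (Fin d → ℝ) → ℝ) (q₁ q₂ : ℝ) : ℝ :=
  q₂ * P1 d p₁ p₀ q₁ + (1 - q₂) * P0 d p₁ p₀ q₁

theorem setIntegral_mem_Icc_of_integral_eq_one {α : Type*} [MeasurableSpace α] {μ : Measure α}
    {f : α → ℝ} (hf : 0 ≤ f) (hf₁ : ∫ x, f x ∂μ = 1) (s : Set α) :
    ∫ x in s, f x ∂μ ∈ Set.Icc 0 1 :=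
  ⟨setIntegral_nonneg_of_ae (.of_forall hf),
    hf₁ ▸ setIntegral_le_integral (.of_integral_ne_zero (hf₁ ▸ one_ne_zero)) (.of_forall hf)⟩

section Detector

variable {d : ℕ} {p₁ p₀ : (Fin d → ℝ) → ℝ}

theorem measurableSet_threshold_lt (h₁m : Measurable p₁) (h₀m : Measurable p₀) (t : ℝ) :
    MeasurableSet {x | t * p₁ x < (1 - t) * p₀ x} :=
  measurableSet_lt (h₁m.const_mul t) (h₀m.const_mul (1 - t))

theorem P1_eq_setIntegral (h₁m : Measurable p₁) (h₀m : Measurable p₀) (t : ℝ) :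
    P1 d p₁ p₀ t = ∫ x in {x | t * p₁ x < (1 - t) * p₀ x}, p₁ x := by
  rw [← integral_indicator (measurableSet_threshold_lt h₁m h₀m t)]
  rfl

theorem P0_eq_setIntegral (h₁m : Measurable p₁) (h₀m : Measurable p₀) (t : ℝ) :
    P0 d p₁ p₀ t = ∫ x in {x | t * p₁ x < (1 - t) * p₀ x}ᶜ, p₀ x := by
  rw [← integral_indicator (measurableSet_threshold_lt h₁m h₀m t).compl]
  simp only [P0, Set.indicator_apply, Set.mem_compl_iff, Set.mem_ofPred_eq, not_lt]

theorem Rhat_eq_integral (h₁m : Measurable p₁) (h₀m : Measurable p₀)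
    (h₁ : Integrable p₁) (h₀ : Integrable p₀) (t q : ℝ) :
    Rhat d p₁ p₀ t q =
      ∫ x, if t * p₁ x < (1 - t) * p₀ x then q * p₁ x else (1 - q) * p₀ x := by
  rw [Rhat, P1_eq_setIntegral h₁m h₀m, P0_eq_setIntegral h₁m h₀m, ← integral_const_mul,
    ← integral_const_mul, ← integral_piecewise (measurableSet_threshold_lt h₁m h₀m t)
      (h₁.const_mul q).integrableOn (h₀.const_mul (1 - q)).integrableOn]
  rfl

theorem Rhat_self_le (h₁m : Measurable p₁) (h₀m : Measurable p₀)
    (h₁ : Integrable p₁) (h₀ : Integrable p₀) (t q : ℝ) :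
    Rhat d p₁ p₀ q q ≤ Rhat d p₁ p₀ t q := by
  have hint (r : ℝ) : Integrable fun x ↦
      if r * p₁ x < (1 - r) * p₀ x then q * p₁ x else (1 - q) * p₀ x :=
    Integrable.piecewise (s := {x | r * p₁ x < (1 - r) * p₀ x})
      (measurableSet_threshold_lt h₁m h₀m r)
      (h₁.const_mul q).integrableOn (h₀.const_mul (1 - q)).integrableOn
  rw [Rhat_eq_integral h₁m h₀m h₁ h₀, Rhat_eq_integral h₁m h₀m h₁ h₀]
  refine integral_mono (hint q) (hint t) fun x ↦ ?_
  dsimp only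
  split_ifs <;> linarith

end Detector

theorem stmt_1_general (d : ℕ) (p₁ p₀ : (Fin d → ℝ) → ℝ)
    (h₁m : Measurable p₁) (h₁nn : ∀ x, 0 ≤ p₁ x) (h₁int : ∫ x, p₁ x = 1)
    (h₀m : Measurable p₀) (h₀nn : ∀ x, 0 ≤ p₀ x) (h₀int : ∫ x, p₀ x = 1)
    (q q' : ℝ) :
    Rhat d p₁ p₀ q' q - Rhat d p₁ p₀ q q' ≤
        (q - q') * (P1 d p₁ p₀ q' - P0 d p₁ p₀ q') ∧
      (q - q') * (P1 d p₁ p₀ q' - P0 d p₁ p₀ q') ≤ |q - q'| := by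
  have h₁ : Integrable p₁ := .of_integral_ne_zero (h₁int ▸ one_ne_zero)
  have h₀ : Integrable p₀ := .of_integral_ne_zero (h₀int ▸ one_ne_zero)
  have hP₁ := P1_eq_setIntegral h₁m h₀m q' ▸
    setIntegral_mem_Icc_of_integral_eq_one h₁nn h₁int _
  have hP₀ := P0_eq_setIntegral h₁m h₀m q' ▸
    setIntegral_mem_Icc_of_integral_eq_one h₀nn h₀int _
  constructor
  · have hopt := Rhat_self_le h₁m h₀m h₁ h₀ q q'
    simp only [Rhat] at hopt ⊢
    linarith
  · calc (q - q') * (P1 d p₁ p₀ q' - P0 d p₁ p₀ q')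
        ≤ |q - q'| * |P1 d p₁ p₀ q' - P0 d p₁ p₀ q'| := abs_mul (q - q') _ ▸ le_abs_self _
      _ ≤ |q - q'| := mul_le_of_le_one_right (abs_nonneg _)
          (abs_sub_le_iff.2 ⟨by linarith [hP₁.2, hP₀.1], by linarith [hP₁.1, hP₀.2]⟩)

/-- `R̂(q';q) − R̂(q;q') ≤ (q − q')·(P₁(q') − P₀(q')) ≤ |q − q'|`. -/
theorem stmt_1 (d : ℕ) (hd : 1 ≤ d) (p₁ p₀ : (Fin d → ℝ) → ℝ)
    (h₁m : Measurable p₁) (h₁nn : ∀ x, 0 ≤ p₁ x) (h₁int : ∫ x, p₁ x = 1)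
    (h₀m : Measurable p₀) (h₀nn : ∀ x, 0 ≤ p₀ x) (h₀int : ∫ x, p₀ x = 1)
    (q q' : ℝ) (hq : q ∈ Set.Icc (0 : ℝ) 1) (hq' : q' ∈ Set.Icc (0 : ℝ) 1) :
    Rhat d p₁ p₀ q' q - Rhat d p₁ p₀ q q' ≤
        (q - q') * (P1 d p₁ p₀ q' - P0 d p₁ p₀ q') ∧
      (q - q') * (P1 d p₁ p₀ q' - P0 d p₁ p₀ q') ≤ |q - q'| :=
  stmt_1_general d p₁ p₀ h₁m h₁nn h₁int h₀m h₀nn h₀int q q'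
end
end

section
/- (Theorem 2, general upper bound with labeled data) Let Y₁,…,Yₙ be i.i.d. Bernoulli(q) random variables (the labels of n labeled training samples) and let q̂ = (1/n)·Σᵢ 1{Yᵢ = 1} be the maximum likelihood estimate of q. Then for every triple (p₁,p₀,q), the expected excess risk satisfies E[R(q̂)] − R(q) ≤ (1/2)·n^{−1/2}. -/
open MeasureTheory

noncomputable section

/-- The risk `R(q') = q·P₁(q') + (1−q)·P₀(q')` of the detector using prior `q'`
when the true prior is `q`. -/
def risk (d : ℕ) (p₁ p₀ : (Fin d → ℝ) → ℝ) (q q' : ℝ) : ℝ :=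
  q * P1 d p₁ p₀ q' + (1 - q) * P0 d p₁ p₀ q'

/-- The Bernoulli(`q`) measure on `Bool` (for `q ∈ [0,1]`). -/
def bern (q : ℝ) : Measure Bool :=
  ENNReal.ofReal q • Measure.dirac true + ENNReal.ofReal (1 - q) • Measure.dirac false

/-!
Where the tests with thresholds `q'` and `q` disagree, the excess `q`-loss is
`|q p₁ - (1 - q) p₀| ≤ |q' - q| (p₁ + p₀)`, and for `q' > q` (resp. `q' < q`) they can only
disagree where the `q`-test decides `H₀` (resp. `H₁`). Integrating against `∫ (p₁ + p₀) = 2` gives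
`R(q') - R(q) ≤ |q' - q| + c (q' - q)` for a constant `c`. The empirical frequency `q̂` is unbiased,
so the linear term averages out, and `E|q̂ - q| ≤ √Var q̂ ≤ 1 / (2 √n)` by Popoviciu's inequality.
-/

open ProbabilityTheory

lemma MeasureTheory.Integrable.ite_zero {α : Type*} {mα : MeasurableSpace α} {μ : Measure α}
    {p : α → Prop} [DecidablePred p] (hp : MeasurableSet {x | p x}) {f : α → ℝ}
    (hf : Integrable f μ) : Integrable (fun x => if p x then f x else 0) μ :=
  (hf.indicator hp).congr (ae_of_all _ fun x => by by_cases h : p x <;> simp [h])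

lemma integral_abs_sub_integral_le_sqrt_variance {Ω : Type*} {mΩ : MeasurableSpace Ω}
    {μ : Measure Ω} [IsProbabilityMeasure μ] {X : Ω → ℝ} (hX : MemLp X 2 μ) :
    ∫ ω, |X ω - μ[X]| ∂μ ≤ √Var[X; μ] := by
  have hY : MemLp (fun ω => |X ω - μ[X]|) 2 μ := (hX.sub (memLp_const _)).abs
  have hvar := variance_nonneg (fun ω => |X ω - μ[X]|) μ
  rw [variance_eq_sub hY] at hvar
  refine Real.le_sqrt_of_sq_le ?_
  rw [variance_eq_integral hX.aemeasurable]
  simpa [sq_abs] using hvar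

def pointwiseRisk (q q' a b : ℝ) : ℝ :=
  q * (if q' * a < (1 - q') * b then a else 0) + (1 - q) * (if (1 - q') * b ≤ q' * a then b else 0)

lemma pointwiseRisk_sub_le {q q' a b : ℝ} (ha : 0 ≤ a) (hb : 0 ≤ b) :
    pointwiseRisk q q' a b - pointwiseRisk q q a b ≤
      (|q' - q| + (q' - q) * (if q * a < (1 - q) * b then 1 else -1)) * (a + b) / 2 := by
  unfold pointwiseRisk
  rcases le_total q q' with h | h
  · rw [abs_of_nonneg (sub_nonneg.2 h)]
    split_ifs <;> nlinarith [mul_le_mul_of_nonneg_right h ha, mul_le_mul_of_nonneg_right h hb]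
  · rw [abs_of_nonpos (sub_nonpos.2 h)]
    split_ifs <;> nlinarith [mul_le_mul_of_nonneg_right h ha, mul_le_mul_of_nonneg_right h hb]

lemma integrable_pointwiseRisk {α : Type*} {mα : MeasurableSpace α} {μ : Measure α}
    {p₁ p₀ : α → ℝ} (h₁m : Measurable p₁) (h₁i : Integrable p₁ μ) (h₀m : Measurable p₀)
    (h₀i : Integrable p₀ μ) (q q' : ℝ) :
    Integrable (fun x => pointwiseRisk q q' (p₁ x) (p₀ x)) μ :=
  ((h₁i.ite_zero (measurableSet_lt (by fun_prop) (by fun_prop))).const_mul q).add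
    ((h₀i.ite_zero (measurableSet_le (by fun_prop) (by fun_prop))).const_mul (1 - q))

section Risk

variable {d : ℕ} {p₁ p₀ : (Fin d → ℝ) → ℝ}

lemma risk_eq_integral_pointwiseRisk (h₁m : Measurable p₁) (h₁i : Integrable p₁)
    (h₀m : Measurable p₀) (h₀i : Integrable p₀) (q q' : ℝ) :
    risk d p₁ p₀ q q' = ∫ x, pointwiseRisk q q' (p₁ x) (p₀ x) := by
  rw [risk, P1, P0, ← integral_const_mul, ← integral_const_mul, ← integral_add]
  · rfl
  · exact (h₁i.ite_zero (measurableSet_lt (by fun_prop) (by fun_prop))).const_mul q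
  · exact (h₀i.ite_zero (measurableSet_le (by fun_prop) (by fun_prop))).const_mul (1 - q)

lemma exists_risk_sub_risk_le (h₁m : Measurable p₁) (h₁nn : ∀ x, 0 ≤ p₁ x)
    (h₁int : ∫ x, p₁ x = 1) (h₀m : Measurable p₀) (h₀nn : ∀ x, 0 ≤ p₀ x)
    (h₀int : ∫ x, p₀ x = 1) (q : ℝ) :
    ∃ c, ∀ q', risk d p₁ p₀ q q' - risk d p₁ p₀ q q ≤ |q' - q| + c * (q' - q) := by
  have h₁i : Integrable p₁ := .of_integral_ne_zero (by simp [h₁int])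
  have h₀i : Integrable p₀ := .of_integral_ne_zero (by simp [h₀int])
  have hw : Integrable fun x => p₁ x + p₀ x := h₁i.add h₀i
  set s : (Fin d → ℝ) → ℝ := fun x => if q * p₁ x < (1 - q) * p₀ x then 1 else -1
  have hs : Integrable fun x => s x * (p₁ x + p₀ x) :=
    hw.bdd_mul (c := 1)
      (Measurable.ite (measurableSet_lt (by fun_prop) (by fun_prop)) measurable_const
        measurable_const).aestronglyMeasurable
      (ae_of_all _ fun x => by simp only [s]; split_ifs <;> simp)
  refine ⟨(∫ x, s x * (p₁ x + p₀ x)) / 2, fun q' => ?_⟩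
  have hrisk := integrable_pointwiseRisk h₁m h₁i h₀m h₀i q
  calc risk d p₁ p₀ q q' - risk d p₁ p₀ q q
      = ∫ x, (pointwiseRisk q q' (p₁ x) (p₀ x) - pointwiseRisk q q (p₁ x) (p₀ x)) := by
        rw [risk_eq_integral_pointwiseRisk h₁m h₁i h₀m h₀i,
          risk_eq_integral_pointwiseRisk h₁m h₁i h₀m h₀i, integral_sub (hrisk q') (hrisk q)]
    _ ≤ ∫ x, (|q' - q| / 2 * (p₁ x + p₀ x) + (q' - q) / 2 * (s x * (p₁ x + p₀ x))) :=
        integral_mono ((hrisk q').sub (hrisk q))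
          ((hw.const_mul _).add (hs.const_mul _))
          fun x => (pointwiseRisk_sub_le (h₁nn x) (h₀nn x)).trans_eq (by ring)
    _ = |q' - q| + (∫ x, s x * (p₁ x + p₀ x)) / 2 * (q' - q) := by
        rw [integral_add (hw.const_mul _) (hs.const_mul _), integral_const_mul,
          integral_const_mul, integral_add h₁i h₀i, h₁int, h₀int]
        ring

end Risk

section Bernoulli

variable {q : ℝ}

lemma isProbabilityMeasure_bern (h0 : 0 ≤ q) (h1 : q ≤ 1) : IsProbabilityMeasure (bern q) := by
  constructor
  simp [bern, ← ENNReal.ofReal_add h0 (sub_nonneg.2 h1)]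

lemma bern_real_singleton_true (h0 : 0 ≤ q) : (bern q).real {true} = q := by
  simp [bern, measureReal_def, h0]

end Bernoulli

def empiricalFreq {n : ℕ} (Y : Fin n → Bool) : ℝ :=
  (∑ i, if Y i = true then (1 : ℝ) else 0) / n

section EmpiricalFreq

variable {n : ℕ} {ν : Measure Bool} [IsProbabilityMeasure ν]

lemma integral_empiricalFreq (hn : n ≠ 0) :
    ∫ Y, empiricalFreq Y ∂(Measure.pi fun _ : Fin n => ν) = ν.real {true} := by
  have hcoord (i : Fin n) :
      ∫ Y, (if Y i = true then (1 : ℝ) else 0) ∂(Measure.pi fun _ : Fin n => ν) =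
        ν.real {true} := by
    rw [integral_comp_eval (X := fun _ => Bool) (f := fun b => if b = true then (1 : ℝ) else 0)
      Measurable.of_discrete.aestronglyMeasurable, integral_fintype Integrable.of_finite]
    simp
  unfold empiricalFreq
  rw [integral_div, integral_finsetSum _ fun i _ => Integrable.of_finite]
  simp_rw [hcoord]
  simp [hn]

lemma variance_empiricalFreq_le :
    Var[empiricalFreq; Measure.pi fun _ : Fin n => ν] ≤ 1 / (4 * n) := by
  have hsum : Var[∑ i : Fin n, fun Y => if Y i = true then (1 : ℝ) else 0;
      Measure.pi fun _ : Fin n => ν] = n * Var[fun b => if b = true then (1 : ℝ) else 0; ν] := by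
    rw [variance_sum_pi (X := fun _ b => if b = true then (1 : ℝ) else 0)
      fun _ => MemLp.of_discrete]
    simp
  have hquarter : Var[fun b => if b = true then (1 : ℝ) else 0; ν] ≤ 1 / 4 := by
    refine (variance_le_sq_of_bounded (a := 0) (b := 1) (ae_of_all _ fun b => ?_)
      Measurable.of_discrete.aemeasurable).trans_eq (by norm_num)
    cases b <;> simp
  have hfreq : (empiricalFreq : (Fin n → Bool) → ℝ) =
      fun Y => (n : ℝ)⁻¹ * (∑ i : Fin n, fun Y => if Y i = true then (1 : ℝ) else 0) Y := by
    ext Y; simp [empiricalFreq, Finset.sum_apply, div_eq_inv_mul]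
  rw [hfreq, variance_const_mul, hsum]
  rcases Nat.eq_zero_or_pos n with rfl | hn
  · simp
  · calc (n : ℝ)⁻¹ ^ 2 * ((n : ℝ) * Var[fun b => if b = true then (1 : ℝ) else 0; ν])
        ≤ (n : ℝ)⁻¹ ^ 2 * ((n : ℝ) * (1 / 4)) := by gcongr
      _ = 1 / (4 * (n : ℝ)) := by field_simp

end EmpiricalFreq

lemma half_mul_rpow_neg_half_eq_sqrt {n : ℕ} :
    (1 / 2) * (n : ℝ) ^ (-(1 / 2) : ℝ) = √(1 / (4 * n)) := by
  rw [Real.rpow_neg (Nat.cast_nonneg n), ← Real.sqrt_eq_rpow, Real.sqrt_div' _ (by positivity),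
    Real.sqrt_mul' _ (Nat.cast_nonneg n), show (4 : ℝ) = 2 ^ 2 by norm_num,
    Real.sqrt_sq (by norm_num), Real.sqrt_one]
  field_simp

theorem stmt_2_general (d : ℕ) (p₁ p₀ : (Fin d → ℝ) → ℝ)
    (h₁m : Measurable p₁) (h₁nn : ∀ x, 0 ≤ p₁ x) (h₁int : ∫ x, p₁ x = 1)
    (h₀m : Measurable p₀) (h₀nn : ∀ x, 0 ≤ p₀ x) (h₀int : ∫ x, p₀ x = 1)
    (q : ℝ) (hq : q ∈ Set.Icc (0 : ℝ) 1) (n : ℕ) (hn : 1 ≤ n) :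
    (∫ Y : Fin n → Bool,
        risk d p₁ p₀ q ((∑ i, if Y i = true then (1 : ℝ) else 0) / n)
          ∂(Measure.pi fun _ : Fin n => bern q)) -
      risk d p₁ p₀ q q ≤ (1 / 2) * (n : ℝ) ^ (-(1 / 2) : ℝ) := by
  have := isProbabilityMeasure_bern hq.1 hq.2
  obtain ⟨c, hc⟩ := exists_risk_sub_risk_le h₁m h₁nn h₁int h₀m h₀nn h₀int q
  set μ := Measure.pi fun _ : Fin n => bern q
  have hmean : ∫ Y, empiricalFreq Y ∂μ = q := by
    rw [integral_empiricalFreq (by omega), bern_real_singleton_true hq.1]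
  change ∫ Y, risk d p₁ p₀ q (empiricalFreq Y) ∂μ - _ ≤ _
  calc ∫ Y, risk d p₁ p₀ q (empiricalFreq Y) ∂μ - risk d p₁ p₀ q q
      = ∫ Y, (risk d p₁ p₀ q (empiricalFreq Y) - risk d p₁ p₀ q q) ∂μ := by
        rw [integral_sub .of_finite (integrable_const _), integral_const, probReal_univ, one_smul]
    _ ≤ ∫ Y, (|empiricalFreq Y - q| + c * (empiricalFreq Y - q)) ∂μ :=
        integral_mono .of_finite .of_finite fun Y => hc _
    _ = ∫ Y, |empiricalFreq Y - μ[empiricalFreq]| ∂μ := by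
        rw [integral_add .of_finite .of_finite, integral_const_mul,
          integral_sub .of_finite (integrable_const _), hmean]
        simp
    _ ≤ √Var[empiricalFreq; μ] := integral_abs_sub_integral_le_sqrt_variance .of_discrete
    _ ≤ √(1 / (4 * n)) := Real.sqrt_le_sqrt variance_empiricalFreq_le
    _ = (1 / 2) * (n : ℝ) ^ (-(1 / 2) : ℝ) := half_mul_rpow_neg_half_eq_sqrt.symm

/-- Theorem 2: with `n` i.i.d. Bernoulli(`q`) labels and `q̂` the empirical frequency of
label `1` (the MLE of `q`), the expected excess risk is at most `(1/2)·n^{-1/2}`. -/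
theorem stmt_2 (d : ℕ) (hd : 1 ≤ d) (p₁ p₀ : (Fin d → ℝ) → ℝ)
    (h₁m : Measurable p₁) (h₁nn : ∀ x, 0 ≤ p₁ x) (h₁int : ∫ x, p₁ x = 1)
    (h₀m : Measurable p₀) (h₀nn : ∀ x, 0 ≤ p₀ x) (h₀int : ∫ x, p₀ x = 1)
    (q : ℝ) (hq : q ∈ Set.Icc (0 : ℝ) 1) (n : ℕ) (hn : 1 ≤ n) :
    (∫ Y : Fin n → Bool,
        risk d p₁ p₀ q ((∑ i, if Y i = true then (1 : ℝ) else 0) / n)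
          ∂(Measure.pi fun _ : Fin n => bern q)) -
      risk d p₁ p₀ q q ≤ (1 / 2) * (n : ℝ) ^ (-(1 / 2) : ℝ) :=
  stmt_2_general d p₁ p₀ h₁m h₁nn h₁int h₀m h₀nn h₀int q hq n hn
end
end

section
/- (Lemma 1, Lipschitz property of the estimated regression function) Let θ ∈ (0,1/2]. For every x ∈ ℝ^d with p₀(x) + p₁(x) > 0 and all q₁, q₂ ∈ [θ, 1−θ], defining η(x;t) = t·p₁(x)/(t·p₁(x) + (1−t)·p₀(x)), one has |η(x;q₁) − η(x;q₂)| ≤ L·|q₁ − q₂| with L = 1/(4θ(1−θ)). -/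
/-!
Writing `D(q) = q·a + (1−q)·b` with `a = p₁(x)`, `b = p₀(x)`, one has
`η(q₁) − η(q₂) = a·b·(q₁ − q₂) / (D(q₁)·D(q₂))`. By AM-GM, `D(q)² ≥ 4q(1−q)·a·b ≥ 4θ(1−θ)·a·b`
for `q ∈ [θ, 1−θ]`, hence `D(q₁)·D(q₂) ≥ 4θ(1−θ)·a·b`, which is exactly the claimed bound.
-/

open MeasureTheory

noncomputable section

def etaEst (d : ℕ) (p₁ p₀ : (Fin d → ℝ) → ℝ) (t : ℝ) (x : Fin d → ℝ) : ℝ :=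
  t * p₁ x / (t * p₁ x + (1 - t) * p₀ x)

namespace EtaEst

theorem mul_one_sub_le_mul_one_sub {θ q : ℝ} (hθq : θ ≤ q) (hq : q ≤ 1 - θ) :
    θ * (1 - θ) ≤ q * (1 - q) := by
  nlinarith [mul_nonneg (sub_nonneg.2 hθq) (sub_nonneg.2 hq)]

theorem four_mul_mul_le_sq_mix (q a b : ℝ) :
    4 * (q * (1 - q)) * (a * b) ≤ (q * a + (1 - q) * b) ^ 2 := by
  nlinarith [sq_nonneg (q * a - (1 - q) * b)]

theorem mix_pos {q a b : ℝ} (hq₀ : 0 < q) (hq₁ : q < 1) (ha : 0 ≤ a) (hb : 0 ≤ b)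
    (hab : 0 < a + b) : 0 < q * a + (1 - q) * b := by
  have h1q : 0 < 1 - q := sub_pos.2 hq₁
  have : q * (1 - q) * (a + b) ≤ q * a + (1 - q) * b := by
    nlinarith [mul_nonneg (mul_nonneg hq₀.le hq₀.le) hb, mul_nonneg (mul_nonneg h1q.le h1q.le) ha]
  exact (by positivity : 0 < q * (1 - q) * (a + b)).trans_le this

theorem four_mul_mul_le_mix_mul_mix {θ q₁ q₂ a b : ℝ} (hθ : 0 ≤ θ) (ha : 0 ≤ a) (hb : 0 ≤ b)
    (hq₁ : q₁ ∈ Set.Icc θ (1 - θ)) (hq₂ : q₂ ∈ Set.Icc θ (1 - θ)) :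
    4 * θ * (1 - θ) * (a * b) ≤ (q₁ * a + (1 - q₁) * b) * (q₂ * a + (1 - q₂) * b) := by
  set c := 4 * θ * (1 - θ) * (a * b)
  have hc : 0 ≤ c := by
    have : θ ≤ 1 - θ := hq₁.1.trans hq₁.2
    have : 0 ≤ 1 - θ := by linarith
    positivity
  have hD_sq {q : ℝ} (hq : q ∈ Set.Icc θ (1 - θ)) : c ≤ (q * a + (1 - q) * b) ^ 2 :=
    calc c = 4 * (θ * (1 - θ)) * (a * b) := by ring
      _ ≤ 4 * (q * (1 - q)) * (a * b) := by
          gcongr 4 * ?_ * _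
          exact mul_one_sub_le_mul_one_sub hq.1 hq.2
      _ ≤ _ := four_mul_mul_le_sq_mix q a b
  have hD_nonneg {q : ℝ} (hq : q ∈ Set.Icc θ (1 - θ)) : 0 ≤ q * a + (1 - q) * b := by
    have : 0 ≤ 1 - q := by linarith [hq.2]
    have : 0 ≤ q := hθ.trans hq.1
    positivity
  refine le_of_sq_le_sq ?_ (mul_nonneg (hD_nonneg hq₁) (hD_nonneg hq₂))
  rw [sq, mul_pow]
  exact mul_le_mul (hD_sq hq₁) (hD_sq hq₂) hc (sq_nonneg _)

theorem mix_div_sub_mix_div {q₁ q₂ a b : ℝ} (h₁ : q₁ * a + (1 - q₁) * b ≠ 0)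
    (h₂ : q₂ * a + (1 - q₂) * b ≠ 0) :
    q₁ * a / (q₁ * a + (1 - q₁) * b) - q₂ * a / (q₂ * a + (1 - q₂) * b)
      = a * b * (q₁ - q₂) / ((q₁ * a + (1 - q₁) * b) * (q₂ * a + (1 - q₂) * b)) := by
  rw [div_sub_div _ _ h₁ h₂]
  ring

theorem abs_mix_div_sub_mix_div_le {θ q₁ q₂ a b : ℝ} (hθ : 0 < θ) (ha : 0 ≤ a) (hb : 0 ≤ b)
    (hab : 0 < a + b) (hq₁ : q₁ ∈ Set.Icc θ (1 - θ)) (hq₂ : q₂ ∈ Set.Icc θ (1 - θ)) :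
    |q₁ * a / (q₁ * a + (1 - q₁) * b) - q₂ * a / (q₂ * a + (1 - q₂) * b)|
      ≤ 1 / (4 * θ * (1 - θ)) * |q₁ - q₂| := by
  have hD₁ := mix_pos (hθ.trans_le hq₁.1) (by linarith [hq₁.2]) ha hb hab
  have hD₂ := mix_pos (hθ.trans_le hq₂.1) (by linarith [hq₂.2]) ha hb hab
  have hL : 0 < 4 * θ * (1 - θ) := by
    have : θ < 1 := by linarith [hq₁.1.trans hq₁.2]
    have : 0 < 1 - θ := by linarith
    positivity
  have hratio : a * b / ((q₁ * a + (1 - q₁) * b) * (q₂ * a + (1 - q₂) * b))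
      ≤ 1 / (4 * θ * (1 - θ)) := by
    rw [div_le_div_iff₀ (mul_pos hD₁ hD₂) hL, one_mul, mul_comm]
    exact four_mul_mul_le_mix_mul_mix hθ.le ha hb hq₁ hq₂
  rw [mix_div_sub_mix_div hD₁.ne' hD₂.ne', mul_div_right_comm, abs_mul,
    abs_of_nonneg (div_nonneg (mul_nonneg ha hb) (mul_pos hD₁ hD₂).le)]
  gcongr

end EtaEst

theorem stmt_3_general (d : ℕ) (θ : ℝ) (hθ : θ ∈ Set.Ioc (0 : ℝ) (1 / 2))
    (p₁ p₀ : (Fin d → ℝ) → ℝ)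
    (h₁nn : ∀ x, 0 ≤ p₁ x)
    (h₀nn : ∀ x, 0 ≤ p₀ x)
    (x : Fin d → ℝ) (hx : 0 < p₀ x + p₁ x)
    (q₁ q₂ : ℝ) (hq₁ : q₁ ∈ Set.Icc θ (1 - θ)) (hq₂ : q₂ ∈ Set.Icc θ (1 - θ)) :
    |etaEst d p₁ p₀ q₁ x - etaEst d p₁ p₀ q₂ x| ≤ (1 / (4 * θ * (1 - θ))) * |q₁ - q₂| :=
  EtaEst.abs_mix_div_sub_mix_div_le hθ.1 (h₁nn x) (h₀nn x) (by linarith) hq₁ hq₂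

/-- Lemma 1: for `q₁, q₂ ∈ [θ, 1−θ]` the regression function estimator is Lipschitz in the
prior, with constant `L = 1/(4θ(1−θ))`, at every point where `p₀(x) + p₁(x) > 0`. -/
theorem stmt_3 (d : ℕ) (hd : 1 ≤ d) (θ : ℝ) (hθ : θ ∈ Set.Ioc (0 : ℝ) (1 / 2))
    (p₁ p₀ : (Fin d → ℝ) → ℝ)
    (h₁m : Measurable p₁) (h₁nn : ∀ x, 0 ≤ p₁ x) (h₁int : ∫ x, p₁ x = 1)
    (h₀m : Measurable p₀) (h₀nn : ∀ x, 0 ≤ p₀ x) (h₀int : ∫ x, p₀ x = 1)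
    (x : Fin d → ℝ) (hx : 0 < p₀ x + p₁ x)
    (q₁ q₂ : ℝ) (hq₁ : q₁ ∈ Set.Icc θ (1 - θ)) (hq₂ : q₂ ∈ Set.Icc θ (1 - θ)) :
    |etaEst d p₁ p₀ q₁ x - etaEst d p₁ p₀ q₂ x| ≤ (1 / (4 * θ * (1 - θ))) * |q₁ - q₂| :=
  stmt_3_general d θ hθ p₁ p₀ h₁nn h₀nn x hx q₁ q₂ hq₁ hq₂
end
end

section
/- (Sharpness of the Lipschitz constant in Lemma 1) Let θ ∈ (0,1/2). For every L' < 1/(4θ(1−θ)) there exist a, b > 0 and q₁ ≠ q₂ in [θ, 1−θ] such that |η(q₁) − η(q₂)| > L'·|q₁ − q₂|, where η(t) = t·a/(t·a + (1−t)·b). In other words, the Lipschitz constant L = 1/(4θ(1−θ)) in Lemma 1 cannot be improved. -/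
/-!
With `a = 1 - θ` and `b = θ` the map `t ↦ t a / (t a + (1 - t) b)` has derivative
`a b / (t a + (1 - t) b)²`, which equals `1 / (4 θ (1 - θ))` at `t = θ`. Hence the difference
quotients between `θ` and `θ + ε` tend to the Lipschitz constant as `ε → 0⁺`, and eventually
exceed any smaller `L'`.
-/

open Filter Topology

noncomputable def posterior (a b t : ℝ) : ℝ := t * a / (t * a + (1 - t) * b)

lemma posterior_sub_posterior {a b s t : ℝ} (hs : s * a + (1 - s) * b ≠ 0)
    (ht : t * a + (1 - t) * b ≠ 0) :
    posterior a b s - posterior a b t =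
      a * b * (s - t) / ((s * a + (1 - s) * b) * (t * a + (1 - t) * b)) := by
  rw [posterior, posterior, div_sub_div _ _ hs ht]
  congr 1
  ring

lemma abs_posterior_sub_posterior_add {θ ε : ℝ} (hθ : θ ∈ Set.Ioo (0 : ℝ) (1 / 2))
    (hε : 0 ≤ ε) :
    |posterior (1 - θ) θ θ - posterior (1 - θ) θ (θ + ε)| =
      ε / (4 * θ * (1 - θ) + 2 * ε * (1 - 2 * θ)) := by
  obtain ⟨hθ0, hθ2⟩ := hθ
  have hD : 0 < 4 * θ * (1 - θ) + 2 * ε * (1 - 2 * θ) := by nlinarith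
  have hDθ : θ * (1 - θ) + (1 - θ) * θ ≠ 0 := by nlinarith
  have hDθε : (θ + ε) * (1 - θ) + (1 - (θ + ε)) * θ ≠ 0 := by nlinarith
  have hdiff : posterior (1 - θ) θ θ - posterior (1 - θ) θ (θ + ε) =
      -ε / (4 * θ * (1 - θ) + 2 * ε * (1 - 2 * θ)) := by
    rw [posterior_sub_posterior hDθ hDθε, div_eq_div_iff (mul_ne_zero hDθ hDθε) hD.ne']
    ring
  rw [hdiff, neg_div, abs_neg, abs_of_nonneg (by positivity)]

/-- Sharpness of the Lipschitz constant in Lemma 1: for every `L' < 1/(4θ(1−θ))` there are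
densities values `a, b > 0` and distinct priors `q₁ ≠ q₂` in `[θ, 1−θ]` with
`|η(q₁) − η(q₂)| > L'·|q₁ − q₂|` where `η(t) = t·a/(t·a + (1−t)·b)`. -/
theorem stmt_5 (θ : ℝ) (hθ : θ ∈ Set.Ioo (0 : ℝ) (1 / 2))
    (L' : ℝ) (hL' : L' < 1 / (4 * θ * (1 - θ))) :
    ∃ a b : ℝ, 0 < a ∧ 0 < b ∧ ∃ q₁ q₂ : ℝ, q₁ ∈ Set.Icc θ (1 - θ) ∧
      q₂ ∈ Set.Icc θ (1 - θ) ∧ q₁ ≠ q₂ ∧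
      L' * |q₁ - q₂| <
        |q₁ * a / (q₁ * a + (1 - q₁) * b) - q₂ * a / (q₂ * a + (1 - q₂) * b)| := by
  obtain ⟨hθ0, hθ2⟩ := hθ
  have hc : 4 * θ * (1 - θ) ≠ 0 := by nlinarith
  have hslope : ContinuousAt (fun ε : ℝ ↦ 1 / (4 * θ * (1 - θ) + 2 * ε * (1 - 2 * θ))) 0 :=
    continuousAt_const.div (by fun_prop) (by simpa using hc)
  have hsmall : ∀ᶠ ε in 𝓝[>] (0 : ℝ),
      ε < 1 - 2 * θ ∧ L' < 1 / (4 * θ * (1 - θ) + 2 * ε * (1 - 2 * θ)) :=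
    nhdsWithin_le_nhds <| (gt_mem_nhds (by linarith)).and
      (continuousAt_const.eventually_lt hslope (by simpa using hL'))
  obtain ⟨ε, ⟨hε_small, hL⟩, hε_pos⟩ := (hsmall.and self_mem_nhdsWithin).exists
  refine ⟨1 - θ, θ, by linarith, hθ0, θ, θ + ε, ⟨le_rfl, by linarith⟩,
    ⟨by linarith, by linarith⟩, by simpa using hε_pos.ne', ?_⟩
  change L' * |θ - (θ + ε)| < |posterior (1 - θ) θ θ - posterior (1 - θ) θ (θ + ε)|
  rw [abs_posterior_sub_posterior_add ⟨hθ0, hθ2⟩ hε_pos.le, sub_add_cancel_left, abs_neg,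
    abs_of_pos hε_pos, div_eq_mul_one_div, mul_comm L']
  exact mul_lt_mul_of_pos_left hL hε_pos
end

section
/- (Theorem 1, general minimax lower bound with labeled data) There exists a constant c > 0 such that for every n ≥ 1 and every measurable estimator q̂ₙ : (ℝ^d × {0,1})ⁿ → [0,1], there exists a triple (p₁,p₀,q) such that E_{π⊗n}[R(q̂ₙ(S))] − R(q) ≥ c·n^{−1/2}, where S denotes the n i.i.d. labeled training samples drawn from π and the estimator is allowed to depend on (p₁,p₀). -/
/-!
Take `p₁ = p₀ = p`, the uniform density on the unit cube. The features then carry no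
information: `R(q') = q` if `q' < 1/2` and `R(q') = 1 - q` otherwise, so under the prior
`q = 1/2 ± δ` the excess risk of `q̂` is `2δ` times the probability that `q̂` falls on the
wrong side of `1/2`. With `δ = 1/(4√n)` the `n`-sample laws of the two priors are close:
the likelihood ratio `H` has second moment `(1 + χ²)ⁿ ≤ 9`, and `2aH ≤ a² + H²` turns this into
`18 P₋(E) ≤ 81 P₊(E) + 9` for every event `E`. Hence `q̂ < 1/2` cannot be unlikely under
`1/2 + δ` and likely under `1/2 - δ` at the same time, and one of the two priors has excess
risk at least `2δ/11 = n^{-1/2}/22`.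
-/

open MeasureTheory

noncomputable section

/-- The joint distribution `π` of `(X,Y)` on `ℝ^d × {0,1}` with density `q·p₁(x)` at `(x,1)`
and `(1−q)·p₀(x)` at `(x,0)`. -/
def jointMeasure (d : ℕ) (p₁ p₀ : (Fin d → ℝ) → ℝ) (q : ℝ) :
    Measure ((Fin d → ℝ) × Bool) :=
  (volume.withDensity fun x => ENNReal.ofReal (q * p₁ x)).map (fun x => (x, true)) +
    (volume.withDensity fun x => ENNReal.ofReal ((1 - q) * p₀ x)).map (fun x => (x, false))

open ProbabilityTheory
open scoped ENNReal NNReal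

lemma ENNReal.two_mul_le_sq_add_sq (a : ℝ≥0) (x : ℝ≥0∞) : 2 * a * x ≤ a ^ 2 + x ^ 2 := by
  induction x using ENNReal.recTopCoe with
  | top => simp
  | coe x => exact_mod_cast two_mul_le_add_sq a x

lemma two_mul_withDensity_apply_le {α : Type*} [MeasurableSpace α] (μ : Measure α)
    (f : α → ℝ≥0∞) {s : Set α} (hs : MeasurableSet s) (a : ℝ≥0) :
    2 * a * μ.withDensity f s ≤ a ^ 2 * μ s + ∫⁻ x, f x ^ 2 ∂μ := by
  rw [withDensity_apply _ hs, ← lintegral_const_mul' _ _ (by finiteness)]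
  calc ∫⁻ x in s, 2 * a * f x ∂μ
      ≤ ∫⁻ x in s, (a : ℝ≥0∞) ^ 2 + f x ^ 2 ∂μ :=
        lintegral_mono fun x => ENNReal.two_mul_le_sq_add_sq a (f x)
    _ = a ^ 2 * μ s + ∫⁻ x in s, f x ^ 2 ∂μ := by
        rw [lintegral_add_left measurable_const, setLIntegral_const, mul_comm]
    _ ≤ a ^ 2 * μ s + ∫⁻ x, f x ^ 2 ∂μ := add_le_add_right (setLIntegral_le_lintegral _ _) _

section Pi

variable {ι : Type*} [Fintype ι] {Ω : ι → Type*} [∀ i, MeasurableSpace (Ω i)]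
  (μ : ∀ i, Measure (Ω i)) [∀ i, IsProbabilityMeasure (μ i)]

lemma lintegral_pi_prod (g : ∀ i, Ω i → ℝ≥0∞) (hg : ∀ i, Measurable (g i)) :
    ∫⁻ x, ∏ i, g i (x i) ∂Measure.pi μ = ∏ i, ∫⁻ y, g i y ∂μ i := by
  rw [lintegral_prod_eq_prod_lintegral_of_indepFun _ _
    (iIndepFun_pi fun i => (hg i).aemeasurable) fun i => (hg i).comp (measurable_pi_apply i)]
  exact Finset.prod_congr rfl fun i _ => ((measurePreserving_eval μ i).lintegral_comp (hg i))

lemma pi_withDensity (f : ∀ i, Ω i → ℝ≥0∞) (hf : ∀ i, Measurable (f i))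
    [∀ i, SigmaFinite ((μ i).withDensity (f i))] :
    Measure.pi (fun i => (μ i).withDensity (f i))
      = (Measure.pi μ).withDensity (fun x => ∏ i, f i (x i)) := by
  refine Measure.pi_eq (μ := fun i => (μ i).withDensity (f i)) fun s hs => ?_
  have hind : (Set.univ.pi s).indicator (fun x => ∏ i, f i (x i))
      = fun x => ∏ i, (s i).indicator (f i) (x i) := by
    ext x
    by_cases hx : x ∈ Set.univ.pi s
    · simp_all [Set.indicator_of_mem]
    · obtain ⟨i, hi⟩ : ∃ i, x i ∉ s i := by simpa using hx
      rw [Set.indicator_of_notMem hx, Finset.prod_eq_zero (Finset.mem_univ i)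
        (Set.indicator_of_notMem hi _)]
  rw [withDensity_apply _ (.univ_pi hs), ← lintegral_indicator (.univ_pi hs), hind,
    lintegral_pi_prod μ _ fun i => (hf i).indicator (hs i)]
  exact Finset.prod_congr rfl fun i _ => by
    rw [lintegral_indicator (hs i), withDensity_apply _ (hs i)]

end Pi

lemma MeasureTheory.Measure.map_withDensity_comp {α β : Type*} [MeasurableSpace α]
    [MeasurableSpace β] (μ : Measure α) {g : α → β} (hg : Measurable g) {f : β → ℝ≥0∞}
    (hf : Measurable f) :
    (μ.map g).withDensity f = (μ.withDensity (f ∘ g)).map g := by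
  ext s hs
  rw [withDensity_apply _ hs, setLIntegral_map hs hf hg, Measure.map_apply hg hs,
    withDensity_apply _ (hg hs), Function.comp_def]

lemma withDensity_ofReal_const_mul {α : Type*} [MeasurableSpace α] (μ : Measure α) {a : ℝ}
    (ha : 0 ≤ a) (p : α → ℝ) :
    μ.withDensity (fun x => ENNReal.ofReal (a * p x))
      = ENNReal.ofReal a • μ.withDensity (fun x => ENNReal.ofReal (p x)) := by
  rw [← withDensity_smul' _ _ ENNReal.ofReal_ne_top]
  simp_rw [ENNReal.ofReal_mul ha]
  rfl

section Labeled

variable {d : ℕ} {p₁ p₀ : (Fin d → ℝ) → ℝ} {q : ℝ}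

lemma jointMeasure_eq_smul_add (hq0 : 0 ≤ q) (hq1 : q ≤ 1) :
    jointMeasure d p₁ p₀ q =
      ENNReal.ofReal q •
          (volume.withDensity fun x => ENNReal.ofReal (p₁ x)).map (fun x => (x, true)) +
        ENNReal.ofReal (1 - q) •
          (volume.withDensity fun x => ENNReal.ofReal (p₀ x)).map (fun x => (x, false)) := by
  rw [jointMeasure, withDensity_ofReal_const_mul _ hq0,
    withDensity_ofReal_const_mul _ (sub_nonneg.2 hq1), Measure.map_smul, Measure.map_smul]

def labelRatio (q q' : ℝ) (b : Bool) : ℝ≥0∞ :=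
  ENNReal.ofReal (if b then q' / q else (1 - q') / (1 - q))

lemma jointMeasure_withDensity_labelRatio {q' : ℝ} (hq0 : 0 < q) (hq1 : q < 1)
    (hq'0 : 0 ≤ q') (hq'1 : q' ≤ 1) :
    (jointMeasure d p₁ p₀ q).withDensity (fun z => labelRatio q q' z.2)
      = jointMeasure d p₁ p₀ q' := by
  have hf : Measurable fun z : (Fin d → ℝ) × Bool => labelRatio q q' z.2 :=
    (measurable_of_countable (labelRatio q q')).comp measurable_snd
  rw [jointMeasure_eq_smul_add hq0.le hq1.le, jointMeasure_eq_smul_add hq'0 hq'1,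
    withDensity_add_measure, withDensity_smul_measure, withDensity_smul_measure,
    Measure.map_withDensity_comp _ measurable_prodMk_right hf,
    Measure.map_withDensity_comp _ measurable_prodMk_right hf]
  simp only [Function.comp_def, labelRatio, if_true, Bool.false_eq_true, if_false,
    withDensity_const, Measure.map_smul, smul_smul,
    ← ENNReal.ofReal_mul hq0.le, ← ENNReal.ofReal_mul (sub_nonneg.2 hq1.le),
    mul_div_cancel₀ _ hq0.ne', mul_div_cancel₀ _ (sub_ne_zero.2 hq1.ne')]

variable (hp₁ : ∫⁻ x, ENNReal.ofReal (p₁ x) = 1)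
  (hp₀ : ∫⁻ x, ENNReal.ofReal (p₀ x) = 1)
include hp₁ hp₀

lemma lintegral_jointMeasure_comp_snd (hq0 : 0 ≤ q) (hq1 : q ≤ 1) (h : Bool → ℝ≥0∞) :
    ∫⁻ z, h z.2 ∂jointMeasure d p₁ p₀ q
      = ENNReal.ofReal q * h true + ENNReal.ofReal (1 - q) * h false := by
  have hh : Measurable fun z : (Fin d → ℝ) × Bool => h z.2 :=
    (measurable_of_countable h).comp measurable_snd
  rw [jointMeasure_eq_smul_add hq0 hq1, lintegral_add_measure, lintegral_smul_measure,
    lintegral_smul_measure, lintegral_map hh measurable_prodMk_right,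
    lintegral_map hh measurable_prodMk_right]
  simp [lintegral_const, hp₁, hp₀, mul_comm]

lemma isProbabilityMeasure_jointMeasure (hq0 : 0 ≤ q) (hq1 : q ≤ 1) :
    IsProbabilityMeasure (jointMeasure d p₁ p₀ q) := by
  constructor
  simpa [← ENNReal.ofReal_add hq0 (sub_nonneg.2 hq1)] using
    lintegral_jointMeasure_comp_snd hp₁ hp₀ hq0 hq1 1

lemma lintegral_labelRatio_sq {q' : ℝ} (hq0 : 0 < q) (hq1 : q < 1)
    (hq'0 : 0 ≤ q') (hq'1 : q' ≤ 1) :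
    ∫⁻ z, labelRatio q q' z.2 ^ 2 ∂jointMeasure d p₁ p₀ q
      = ENNReal.ofReal (q' ^ 2 / q + (1 - q') ^ 2 / (1 - q)) := by
  rw [lintegral_jointMeasure_comp_snd hp₁ hp₀ hq0.le hq1.le (fun b => labelRatio q q' b ^ 2)]
  have h1q : 0 < 1 - q := sub_pos.2 hq1
  simp only [labelRatio, if_true, Bool.false_eq_true, if_false]
  rw [← ENNReal.ofReal_pow (by positivity), ← ENNReal.ofReal_pow (by bound),
    ← ENNReal.ofReal_mul hq0.le, ← ENNReal.ofReal_mul h1q.le,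
    ← ENNReal.ofReal_add (by positivity) (by bound)]
  congr 1
  field_simp

section Sample

variable {ι : Type*} [Fintype ι] {q' : ℝ}
  (hq0 : 0 < q) (hq1 : q < 1) (hq'0 : 0 ≤ q') (hq'1 : q' ≤ 1)
include hp₁ hp₀ hq0 hq1 hq'0 hq'1

lemma pi_jointMeasure_eq_withDensity :
    Measure.pi (fun _ : ι => jointMeasure d p₁ p₀ q')
      = (Measure.pi fun _ : ι => jointMeasure d p₁ p₀ q).withDensity
          (fun S => ∏ i, labelRatio q q' (S i).2) := by
  have := isProbabilityMeasure_jointMeasure hp₁ hp₀ hq0.le hq1.le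
  have : IsProbabilityMeasure
      ((jointMeasure d p₁ p₀ q).withDensity fun z => labelRatio q q' z.2) := by
    rw [jointMeasure_withDensity_labelRatio hq0 hq1 hq'0 hq'1]
    exact isProbabilityMeasure_jointMeasure hp₁ hp₀ hq'0 hq'1
  have h := pi_withDensity (fun _ : ι => jointMeasure d p₁ p₀ q) (fun _ z => labelRatio q q' z.2)
    fun _ => (measurable_of_countable (labelRatio q q')).comp measurable_snd
  rwa [jointMeasure_withDensity_labelRatio hq0 hq1 hq'0 hq'1] at h

lemma two_mul_pi_jointMeasure_le {E : Set (ι → (Fin d → ℝ) × Bool)} (hE : MeasurableSet E)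
    (a : ℝ≥0) :
    2 * a * Measure.pi (fun _ : ι => jointMeasure d p₁ p₀ q') E
      ≤ a ^ 2 * Measure.pi (fun _ : ι => jointMeasure d p₁ p₀ q) E
        + ENNReal.ofReal (q' ^ 2 / q + (1 - q') ^ 2 / (1 - q)) ^ Fintype.card ι := by
  have := isProbabilityMeasure_jointMeasure hp₁ hp₀ hq0.le hq1.le
  rw [pi_jointMeasure_eq_withDensity hp₁ hp₀ hq0 hq1 hq'0 hq'1]
  refine (two_mul_withDensity_apply_le _ _ hE a).trans_eq ?_
  simp_rw [← Finset.prod_pow]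
  have h := lintegral_pi_prod (fun _ : ι => jointMeasure d p₁ p₀ q)
    (fun _ z => labelRatio q q' z.2 ^ 2)
    fun _ => ((measurable_of_countable (labelRatio q q')).comp measurable_snd).pow_const 2
  rw [h, lintegral_labelRatio_sq hp₁ hp₀ hq0 hq1 hq'0 hq'1, Finset.prod_const, Finset.card_univ]

lemma two_mul_pi_jointMeasure_real_le {E : Set (ι → (Fin d → ℝ) × Bool)}
    (hE : MeasurableSet E) (a : ℝ≥0) :
    2 * a * (Measure.pi fun _ : ι => jointMeasure d p₁ p₀ q').real E
      ≤ a ^ 2 * (Measure.pi fun _ : ι => jointMeasure d p₁ p₀ q).real E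
        + (q' ^ 2 / q + (1 - q') ^ 2 / (1 - q)) ^ Fintype.card ι := by
  have := isProbabilityMeasure_jointMeasure hp₁ hp₀ hq0.le hq1.le
  have hM : 0 ≤ q' ^ 2 / q + (1 - q') ^ 2 / (1 - q) := by
    have := sub_pos.2 hq1; positivity
  have h := ENNReal.toReal_mono (by finiteness)
    (two_mul_pi_jointMeasure_le hp₁ hp₀ hq0 hq1 hq'0 hq'1 hE a)
  rw [ENNReal.toReal_add (by finiteness) (by finiteness)] at h
  simpa [measureReal_def, ENNReal.toReal_ofReal hM] using h

end Sample

end Labeled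

lemma lintegral_ofReal_eq_one_of_integral_eq_one {α : Type*} [MeasurableSpace α]
    {μ : Measure α} {p : α → ℝ} (hp : 0 ≤ᵐ[μ] p) (h : ∫ x, p x ∂μ = 1) :
    ∫⁻ x, ENNReal.ofReal (p x) ∂μ = 1 := by
  rw [← ofReal_integral_eq_lintegral_ofReal (.of_integral_ne_zero (by simp [h])) hp, h,
    ENNReal.ofReal_one]

lemma integral_indicator_Icc_zero_one (d : ℕ) :
    ∫ x, (Set.Icc (0 : Fin d → ℝ) 1).indicator (1 : (Fin d → ℝ) → ℝ) x = 1 := by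
  simp [integral_indicator_one measurableSet_Icc, measureReal_def, Real.volume_Icc_pi]

section SameDensity

variable {d : ℕ} {p : (Fin d → ℝ) → ℝ} (hp : ∀ x, 0 ≤ p x) (hp1 : ∫ x, p x = 1)
include hp hp1

lemma risk_self (q q' : ℝ) : risk d p p q q' = if 2 * q' < 1 then q else 1 - q := by
  have hP1 : P1 d p p q' = if 2 * q' < 1 then 1 else 0 := by
    have h : ∀ x, (if q' * p x < (1 - q') * p x then p x else 0)
        = if 2 * q' < 1 then p x else 0 := fun x => by
      rcases (hp x).eq_or_lt with hx | hx
      · simp [← hx]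
      · exact if_congr (by rw [mul_lt_mul_iff_of_pos_right hx]; constructor <;> intro <;> linarith)
          rfl rfl
    simp_rw [P1, h]
    split_ifs <;> simp [hp1]
  have hP0 : P0 d p p q' = if 1 ≤ 2 * q' then 1 else 0 := by
    have h : ∀ x, (if (1 - q') * p x ≤ q' * p x then p x else 0)
        = if 1 ≤ 2 * q' then p x else 0 := fun x => by
      rcases (hp x).eq_or_lt with hx | hx
      · simp [← hx]
      · exact if_congr (by rw [mul_le_mul_iff_of_pos_right hx]; constructor <;> intro <;> linarith)
          rfl rfl
    simp_rw [P0, h]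
    split_ifs <;> simp [hp1]
  rw [risk, hP1, hP0]
  by_cases h : 2 * q' < 1
  · rw [if_pos h, if_pos h, if_neg (not_le.2 h)]; ring
  · rw [if_neg h, if_neg h, if_pos (not_lt.1 h)]; ring

lemma integral_risk_self {Ω : Type*} [MeasurableSpace Ω] (ν : Measure Ω) [IsProbabilityMeasure ν]
    {g : Ω → ℝ} (hg : Measurable g) (q : ℝ) :
    ∫ ω, risk d p p q (g ω) ∂ν = (1 - q) + (2 * q - 1) * ν.real {ω | 2 * g ω < 1} := by
  have hE : MeasurableSet {ω | 2 * g ω < 1} := measurableSet_lt (by fun_prop) measurable_const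
  have h : ∀ ω, risk d p p q (g ω) = (1 - q) + (2 * q - 1) * {ω | 2 * g ω < 1}.indicator 1 ω := by
    intro ω
    by_cases hω : 2 * g ω < 1 <;> simp [risk_self hp hp1, hω]; ring
  simp_rw [h]
  rw [integral_add (integrable_const _) (((integrable_const 1).indicator hE).const_mul _),
    integral_const, integral_const_mul, integral_indicator_one hE]
  simp

end SameDensity

lemma sq_le_of_sixteen_mul_sq_eq_one {n : ℕ} {δ : ℝ} (hδ : 16 * n * δ ^ 2 = 1) :
    δ ^ 2 ≤ 1 / 16 := by
  rcases n.eq_zero_or_pos with rfl | hn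
  · simp at hδ
  · have hn : (1 : ℝ) ≤ n := by exact_mod_cast hn
    nlinarith [mul_nonneg (sub_nonneg.2 hn) (sq_nonneg δ)]

lemma pow_chiSq_le_nine {n : ℕ} {δ : ℝ} (hδ : 16 * n * δ ^ 2 = 1) :
    ((1 / 2 - δ) ^ 2 / (1 / 2 + δ) + (1 / 2 + δ) ^ 2 / (1 / 2 - δ)) ^ n ≤ 9 := by
  have hδ2 := sq_le_of_sixteen_mul_sq_eq_one hδ
  have hn : (n : ℝ) ≠ 0 := by rintro h; simp [h] at hδ
  have hqa : 0 < 1 / 2 + δ := by nlinarith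
  have hqb : 0 < 1 / 2 - δ := by nlinarith
  have hrate : 4 / (3 * n) = 64 / 3 * δ ^ 2 := by field_simp; linarith
  have hM : (1 / 2 - δ) ^ 2 / (1 / 2 + δ) + (1 / 2 + δ) ^ 2 / (1 / 2 - δ) ≤ 1 + 4 / (3 * n) := by
    rw [hrate, div_add_div _ _ hqa.ne' hqb.ne', div_le_iff₀ (mul_pos hqa hqb)]
    nlinarith [mul_nonneg (sq_nonneg δ) (sub_nonneg.2 hδ2)]
  calc ((1 / 2 - δ) ^ 2 / (1 / 2 + δ) + (1 / 2 + δ) ^ 2 / (1 / 2 - δ)) ^ n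
      ≤ (1 + 4 / (3 * n)) ^ n := pow_le_pow_left₀ (by positivity) hM n
    _ ≤ Real.exp (4 / (3 * n)) ^ n :=
        pow_le_pow_left₀ (by positivity) (by linarith [Real.add_one_le_exp (4 / (3 * n))]) n
    _ = Real.exp (4 / 3) := by rw [← Real.exp_nat_mul]; field_simp
    _ ≤ Real.exp 1 ^ 2 := by rw [← Real.exp_nat_mul]; exact Real.exp_le_exp.2 (by norm_num)
    _ ≤ 9 := by nlinarith [Real.exp_one_lt_three, Real.exp_pos 1]

lemma exists_excessRisk_ge {d : ℕ} {p : (Fin d → ℝ) → ℝ} (hp : ∀ x, 0 ≤ p x)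
    (hp1 : ∫ x, p x = 1) {n : ℕ} {qhat : (Fin n → (Fin d → ℝ) × Bool) → ℝ}
    (hqhat : Measurable qhat) {δ : ℝ} (hδ0 : 0 < δ) (hδ : 16 * n * δ ^ 2 = 1) :
    ∃ q ∈ Set.Icc (0 : ℝ) 1, 2 * δ / 11 ≤
      (∫ S, risk d p p q (qhat S) ∂(Measure.pi fun _ : Fin n => jointMeasure d p p q))
        - risk d p p q q := by
  have hδ4 : δ ≤ 1 / 4 := by nlinarith [sq_le_of_sixteen_mul_sq_eq_one hδ]
  have hpl := lintegral_ofReal_eq_one_of_integral_eq_one (.of_forall hp) hp1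
  have hE : MeasurableSet {S | 2 * qhat S < 1} := measurableSet_lt (by fun_prop) measurable_const
  have hchi := two_mul_pi_jointMeasure_real_le (ι := Fin n) hpl hpl (q := 1 / 2 + δ)
    (q' := 1 / 2 - δ) (by linarith) (by linarith) (by linarith) (by linarith) hE 9
  rw [show 1 - (1 / 2 - δ) = 1 / 2 + δ by ring, show 1 - (1 / 2 + δ) = 1 / 2 - δ by ring,
    Fintype.card_fin] at hchi
  have h9 := pow_chiSq_le_nine hδ
  push_cast at hchi
  by_cases hA : 1 / 11 ≤
      (Measure.pi fun _ : Fin n => jointMeasure d p p (1 / 2 + δ)).real {S | 2 * qhat S < 1}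
  · refine ⟨1 / 2 + δ, ⟨by linarith, by linarith⟩, ?_⟩
    have := isProbabilityMeasure_jointMeasure hpl hpl (q := 1 / 2 + δ) (by linarith) (by linarith)
    rw [integral_risk_self hp hp1 _ hqhat, risk_self hp hp1, if_neg (by linarith)]
    nlinarith
  · refine ⟨1 / 2 - δ, ⟨by linarith, by linarith⟩, ?_⟩
    have := isProbabilityMeasure_jointMeasure hpl hpl (q := 1 / 2 - δ) (by linarith) (by linarith)
    rw [integral_risk_self hp hp1 _ hqhat, risk_self hp hp1, if_pos (by linarith)]
    nlinarith

theorem stmt_6_general (d : ℕ) :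
    ∃ c : ℝ, 0 < c ∧ ∀ n : ℕ, 1 ≤ n →
      ∀ qhat : (Fin n → (Fin d → ℝ) × Bool) → ℝ, Measurable qhat →
        (∀ S, qhat S ∈ Set.Icc (0 : ℝ) 1) →
        ∃ p₁ p₀ : (Fin d → ℝ) → ℝ, ∃ q : ℝ,
          Measurable p₁ ∧ (∀ x, 0 ≤ p₁ x) ∧ (∫ x, p₁ x) = 1 ∧
          Measurable p₀ ∧ (∀ x, 0 ≤ p₀ x) ∧ (∫ x, p₀ x) = 1 ∧
          q ∈ Set.Icc (0 : ℝ) 1 ∧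
          c * (n : ℝ) ^ (-(1 / 2) : ℝ) ≤
            (∫ S, risk d p₁ p₀ q (qhat S)
                ∂(Measure.pi fun _ : Fin n => jointMeasure d p₁ p₀ q)) -
              risk d p₁ p₀ q q := by
  refine ⟨1 / 22, by norm_num, fun n hn qhat hqhat _ => ?_⟩
  set p := (Set.Icc (0 : Fin d → ℝ) 1).indicator (1 : (Fin d → ℝ) → ℝ)
  have hp : ∀ x, 0 ≤ p x := Set.indicator_nonneg fun _ _ => zero_le_one
  have hp1 : ∫ x, p x = 1 := integral_indicator_Icc_zero_one d
  have hpm : Measurable p := measurable_one.indicator measurableSet_Icc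
  have hn : (0 : ℝ) < n := by exact_mod_cast hn
  have hδ : 16 * n * (1 / (4 * √n)) ^ 2 = 1 := by
    rw [div_pow, mul_pow, Real.sq_sqrt hn.le]; field_simp; norm_num
  obtain ⟨q, hq, hexcess⟩ := exists_excessRisk_ge hp hp1 hqhat (by positivity) hδ
  refine ⟨p, p, q, hpm, hp, hp1, hpm, hp, hp1, hq, le_of_eq_of_le ?_ hexcess⟩
  rw [Real.rpow_neg hn.le, ← Real.sqrt_eq_rpow]
  field_simp
  ring

/-- Theorem 1: minimax lower bound `c·n^{-1/2}` over all triples `(p₁,p₀,q)` for any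
estimator of the prior based on `n` i.i.d. labeled samples. -/
theorem stmt_6 (d : ℕ) (hd : 1 ≤ d) :
    ∃ c : ℝ, 0 < c ∧ ∀ n : ℕ, 1 ≤ n →
      ∀ qhat : (Fin n → (Fin d → ℝ) × Bool) → ℝ, Measurable qhat →
        (∀ S, qhat S ∈ Set.Icc (0 : ℝ) 1) →
        ∃ p₁ p₀ : (Fin d → ℝ) → ℝ, ∃ q : ℝ,
          Measurable p₁ ∧ (∀ x, 0 ≤ p₁ x) ∧ (∫ x, p₁ x) = 1 ∧
          Measurable p₀ ∧ (∀ x, 0 ≤ p₀ x) ∧ (∫ x, p₀ x) = 1 ∧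
          q ∈ Set.Icc (0 : ℝ) 1 ∧
          c * (n : ℝ) ^ (-(1 / 2) : ℝ) ≤
            (∫ S, risk d p₁ p₀ q (qhat S)
                ∂(Measure.pi fun _ : Fin n => jointMeasure d p₁ p₀ q)) -
              risk d p₁ p₀ q q :=
  stmt_6_general d
end
end

section
/- (Theorem 5, exponential rates when α = ∞) Let θ ∈ (0,1/2) and c > 0, and let (p₁,p₀,q) be a triple with q ∈ [θ,1−θ] satisfying P_X(0 < |η(X) − 1/2| ≤ c) = 0. If Y₁,…,Yₙ are the labels of n i.i.d. training samples from π and q̂ is the trimmed maximum likelihood estimate, i.e. the projection of (1/n)·Σᵢ 1{Yᵢ=1} onto [θ,1−θ], then E[R(q̂)] − R(q) ≤ 2·exp(−2nc²/L²), where L = 1/(4θ(1−θ)). -/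
open MeasureTheory

noncomputable section

/-- The regression function `η(x) = q·p₁(x)/(q·p₁(x)+(1−q)·p₀(x))`. -/
def eta (d : ℕ) (p₁ p₀ : (Fin d → ℝ) → ℝ) (q : ℝ) (x : Fin d → ℝ) : ℝ :=
  q * p₁ x / (q * p₁ x + (1 - q) * p₀ x)

/-- The marginal `P_X`, with density `q·p₁ + (1−q)·p₀`. -/
def margX (d : ℕ) (p₁ p₀ : (Fin d → ℝ) → ℝ) (q : ℝ) : Measure (Fin d → ℝ) :=
  volume.withDensity fun x => ENNReal.ofReal (q * p₁ x + (1 - q) * p₀ x)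

/-- The trimmed MLE of the prior from the labels of the sample `S`. -/
def trimmedMLE (d : ℕ) (θ : ℝ) (n : ℕ) (S : Fin n → (Fin d → ℝ) × Bool) : ℝ :=
  max θ (min (1 - θ) ((∑ i, if (S i).2 = true then (1 : ℝ) else 0) / n))

/-!
Under the margin condition the plug-in rule is insensitive to the prior. If `q, q' ∈ [θ, 1-θ]`
and `|q' - q| ≤ c / L` with `L = 1/(4θ(1-θ))`, then at a point where the rules for `q` and `q'`
disagree one has `|q p₁ - (1-q) p₀| ≤ 2c (q p₁ + (1-q) p₀)`, i.e. `|η - 1/2| ≤ c`. Hence the two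
rules incur different losses only on `{0 < |η - 1/2| ≤ c}`, which is `P_X`-null, and
`R(q') = R(q)`. Since `0 ≤ R ≤ 1` and clamping to `[θ, 1-θ]` is `1`-Lipschitz, the excess risk
of `q̂` is at most the probability that the empirical label frequency is `c / L` away from `q`,
which Hoeffding's inequality bounds by `2 exp(-2nc²/L²)`.
-/

open ProbabilityTheory

lemma withDensity_ofReal_const_mul_univ {α : Type*} [MeasurableSpace α] {μ : Measure α}
    {f : α → ℝ} (hf : 0 ≤ f) (hf1 : ∫ x, f x ∂μ = 1) {a : ℝ} (ha : 0 ≤ a) :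
    (μ.withDensity fun x => ENNReal.ofReal (a * f x)) Set.univ = ENNReal.ofReal a := by
  rw [withDensity_apply _ MeasurableSet.univ, Measure.restrict_univ,
    ← ofReal_integral_eq_lintegral_ofReal ((integrable_of_integral_eq_one hf1).const_mul a)
      (ae_of_all _ fun x => mul_nonneg ha (hf x)), integral_const_mul, hf1, mul_one]

lemma integrable_ite_zero {α : Type*} [MeasurableSpace α] {μ : Measure α} {f : α → ℝ}
    (hf : Integrable f μ) {P : α → Prop} [DecidablePred P] (hP : MeasurableSet {x | P x}) :
    Integrable (fun x => if P x then f x else 0) μ := by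
  refine (hf.indicator hP).congr (ae_of_all _ fun x => ?_)
  by_cases h : P x <;> simp [h]

lemma integral_sub_le_measureReal_of_le_add_indicator {Ω : Type*} [MeasurableSpace Ω]
    {P : Measure Ω} [IsProbabilityMeasure P] {f : Ω → ℝ} {a : ℝ} {E : Set Ω}
    (hE : MeasurableSet E) (hf : 0 ≤ f) (hfa : ∀ ω, f ω ≤ a + E.indicator 1 ω) :
    ∫ ω, f ω ∂P - a ≤ P.real E := by
  have hE1 : Integrable (E.indicator (1 : Ω → ℝ)) P := (integrable_const 1).indicator hE
  -- `f` need not be integrable: otherwise its integral is `0`.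
  have := integral_mono_of_nonneg (g := fun ω => a + E.indicator 1 ω) (ae_of_all _ hf)
    ((integrable_const a).add hE1) (ae_of_all _ hfa)
  rw [integral_add (integrable_const a) hE1,
    integral_indicator_one hE, integral_const, probReal_univ, one_smul] at this
  linarith

lemma measureReal_abs_sum_sub_integral_ge_le {Ω : Type*} [MeasurableSpace Ω] (μ : Measure Ω)
    [IsProbabilityMeasure μ] {Y : Ω → ℝ} (hY : Measurable Y) (hY01 : ∀ ω, Y ω ∈ Set.Icc 0 1)
    (n : ℕ) {ε : ℝ} (hε : 0 ≤ ε) :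
    (Measure.pi fun _ : Fin n => μ).real {S | n * ε ≤ |∑ i, (Y (S i) - μ[Y])|} ≤
      2 * Real.exp (-2 * n * ε ^ 2) := by
  set P := Measure.pi fun _ : Fin n => μ
  set X : Fin n → (Fin n → Ω) → ℝ := fun i S => Y (S i) - μ[Y]
  have hindep : iIndepFun X P :=
    iIndepFun_pi (X := fun _ ω => Y ω - μ[Y]) fun _ => (hY.sub_const _).aemeasurable
  have hsubG : ∀ i, HasSubgaussianMGF (X i) ((‖(1 : ℝ) - 0‖₊ / 2) ^ 2) P := by
    intro i
    have hmean : P[fun S => Y (S i)] = μ[Y] := integral_comp_eval hY.aestronglyMeasurable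
    have := hasSubgaussianMGF_of_mem_Icc (μ := P) (X := fun S => Y (S i)) (a := 0) (b := 1)
      (hY.comp (measurable_pi_apply i)).aemeasurable (ae_of_all _ fun S => hY01 (S i))
    rwa [hmean] at this
  have htail : ∀ Z : Fin n → (Fin n → Ω) → ℝ, iIndepFun Z P →
      (∀ i, HasSubgaussianMGF (Z i) ((‖(1 : ℝ) - 0‖₊ / 2) ^ 2) P) →
      P.real {S | n * ε ≤ ∑ i, Z i S} ≤ Real.exp (-2 * n * ε ^ 2) := by
    intro Z hZ hZsubG
    refine (HasSubgaussianMGF.measure_sum_ge_le_of_iIndepFun hZ (fun i _ => hZsubG i)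
      (by positivity)).trans_eq ?_
    congr 1
    rcases eq_or_ne n 0 with rfl | hn
    · simp
    · simp only [sub_zero, nnnorm_one, one_div, inv_pow, Finset.sum_const, Finset.card_univ,
        Fintype.card_fin, nsmul_eq_mul, NNReal.coe_mul, NNReal.coe_natCast, NNReal.coe_inv,
        NNReal.coe_pow, NNReal.coe_ofNat, neg_mul]
      field_simp
  calc P.real {S | n * ε ≤ |∑ i, X i S|}
      ≤ P.real ({S | n * ε ≤ ∑ i, X i S} ∪ {S | n * ε ≤ ∑ i, (-X i) S}) := by
        refine measureReal_mono (fun S hS => ?_)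
        simp only [Set.mem_ofPred_eq, Set.mem_union, Pi.neg_apply, Finset.sum_neg_distrib] at hS ⊢
        exact (le_abs'.mp hS).symm.imp_right le_neg_of_le_neg
    _ ≤ _ := by
        refine (measureReal_union_le _ _).trans ?_
        rw [two_mul]
        exact add_le_add (htail X hindep hsubG)
          (htail _ (hindep.comp (fun _ => Neg.neg) fun _ => measurable_neg) fun i => (hsubG i).neg)

lemma abs_max_min_sub_le {a b q : ℝ} (hq : q ∈ Set.Icc a b) (t : ℝ) :
    |max a (min b t) - q| ≤ |t - q| := by
  have hab := hq.1.trans hq.2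
  have := Set.abs_projIcc_sub_projIcc hab (c := t) (d := q)
  rwa [Set.projIcc_of_mem hab hq, Set.coe_projIcc] at this

lemma two_mul_mul_one_sub_le_mul_one_sub_add_mul_one_sub {θ q q' : ℝ} (hq : q ∈ Set.Icc θ (1 - θ))
    (hq' : q' ∈ Set.Icc θ (1 - θ)) : 2 * θ * (1 - θ) ≤ q' * (1 - q) + q * (1 - q') := by
  obtain ⟨hθq, hq1⟩ := hq
  obtain ⟨hθq', hq'1⟩ := hq'
  nlinarith [mul_le_mul_of_nonneg_left (by linarith : q' - θ ≤ 1 - 2 * θ) (sub_nonneg.2 hθq),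
    mul_le_mul_of_nonneg_left (by linarith : q - θ ≤ 1 - 2 * θ) (sub_nonneg.2 hθq')]

lemma abs_sub_le_of_decision_flip {θ c q q' t s : ℝ} (hθ : 0 < θ) (hq : q ∈ Set.Icc θ (1 - θ))
    (hq' : q' ∈ Set.Icc θ (1 - θ)) (hclose : |q' - q| ≤ 4 * θ * (1 - θ) * c)
    (ht : 0 ≤ t) (hs : 0 ≤ s) (h' : q' * t ≤ (1 - q') * s) (h : (1 - q) * s ≤ q * t) :
    |q * t - (1 - q) * s| ≤ 2 * c * (q * t + (1 - q) * s) := by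
  have hθ1 : 0 < 1 - θ := by linarith [hq.1, hq.2]
  have hq0 : 0 ≤ q := hθ.le.trans hq.1
  have h1q : 0 ≤ 1 - q := by linarith [hq.2]
  set a := q * t
  set b := (1 - q) * s
  have hba : 0 ≤ a - b := sub_nonneg.2 h
  have hflip : q' * (1 - q) * a ≤ q * (1 - q') * b := by
    nlinarith [mul_le_mul_of_nonneg_left h' (mul_nonneg hq0 h1q)]
  have hθab : 2 * θ * (1 - θ) * (a - b) ≤ 4 * θ * (1 - θ) * c * (a + b) := calc
    2 * θ * (1 - θ) * (a - b) ≤ (q' * (1 - q) + q * (1 - q')) * (a - b) :=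
      mul_le_mul_of_nonneg_right (two_mul_mul_one_sub_le_mul_one_sub_add_mul_one_sub hq hq') hba
    -- the difference of the two sides is `2 (q (1 - q') b - q' (1 - q) a)`
    _ ≤ (q - q') * (a + b) := by nlinarith
    _ ≤ 4 * θ * (1 - θ) * c * (a + b) :=
      mul_le_mul_of_nonneg_right ((le_abs_self _).trans (abs_sub_comm q q' ▸ hclose))
        (add_nonneg (mul_nonneg hq0 ht) (mul_nonneg h1q hs))
  rw [abs_of_nonneg hba]
  nlinarith [mul_pos hθ hθ1]

lemma abs_div_add_sub_half_mem_Ioc {a b c : ℝ} (ha : 0 ≤ a) (hb : 0 ≤ b) (hab : a ≠ b)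
    (h : |a - b| ≤ 2 * c * (a + b)) : |a / (a + b) - 1 / 2| ∈ Set.Ioc 0 c := by
  have hpos : 0 < a + b := by
    rcases ha.lt_or_eq with ha | rfl
    · linarith
    · exact lt_of_le_of_ne (by simpa using hb) (by simpa using hab)
  have heq : a / (a + b) - 1 / 2 = (a - b) / (2 * (a + b)) := by
    field_simp
    ring
  rw [heq, abs_div, abs_of_pos (by positivity : (0 : ℝ) < 2 * (a + b))]
  refine ⟨div_pos (abs_pos.2 (sub_ne_zero.2 hab)) (by positivity), ?_⟩
  rw [div_le_iff₀ (by positivity)]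
  linarith

lemma measurable_label {α : Type*} [MeasurableSpace α] :
    Measurable fun z : α × Bool => if z.2 = true then (1 : ℝ) else 0 :=
  Measurable.ite (measurable_snd (measurableSet_singleton true)) measurable_const measurable_const

section Model

variable {d : ℕ} {p₁ p₀ : (Fin d → ℝ) → ℝ}

lemma jointMeasure_apply {q : ℝ} {s : Set ((Fin d → ℝ) × Bool)} (hs : MeasurableSet s) :
    jointMeasure d p₁ p₀ q s =
      (volume.withDensity fun x => ENNReal.ofReal (q * p₁ x)) ((·, true) ⁻¹' s) +
        (volume.withDensity fun x => ENNReal.ofReal ((1 - q) * p₀ x)) ((·, false) ⁻¹' s) := by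
  rw [jointMeasure, Measure.add_apply, Measure.map_apply measurable_prodMk_right hs,
    Measure.map_apply measurable_prodMk_right hs]

lemma isProbabilityMeasure_jointMeasure_s9 {q : ℝ} (h₁nn : 0 ≤ p₁) (h₁int : ∫ x, p₁ x = 1)
    (h₀nn : 0 ≤ p₀) (h₀int : ∫ x, p₀ x = 1) (hq : q ∈ Set.Icc (0 : ℝ) 1) :
    IsProbabilityMeasure (jointMeasure d p₁ p₀ q) := by
  constructor
  rw [jointMeasure_apply MeasurableSet.univ, Set.preimage_univ, Set.preimage_univ,
    withDensity_ofReal_const_mul_univ h₁nn h₁int hq.1,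
    withDensity_ofReal_const_mul_univ h₀nn h₀int (sub_nonneg.2 hq.2),
    ← ENNReal.ofReal_add hq.1 (sub_nonneg.2 hq.2), add_sub_cancel, ENNReal.ofReal_one]

lemma integral_label_jointMeasure {q : ℝ} (h₁nn : 0 ≤ p₁) (h₁int : ∫ x, p₁ x = 1) (hq : 0 ≤ q) :
    ∫ z, (if z.2 = true then (1 : ℝ) else 0) ∂jointMeasure d p₁ p₀ q = q := by
  have hs : MeasurableSet {z : (Fin d → ℝ) × Bool | z.2 = true} :=
    measurable_snd (measurableSet_singleton true)
  have hlabel : jointMeasure d p₁ p₀ q {z | z.2 = true} = ENNReal.ofReal q := by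
    rw [jointMeasure_apply hs]
    simp [withDensity_ofReal_const_mul_univ h₁nn h₁int hq]
  have hind : (fun z : (Fin d → ℝ) × Bool => if z.2 = true then (1 : ℝ) else 0) =
      Set.indicator {z | z.2 = true} 1 := by
    ext z
    by_cases h : z.2 = true <;> simp [h]
  rw [hind, integral_indicator_one hs, measureReal_def, hlabel, ENNReal.toReal_ofReal hq]

lemma measureReal_abs_sum_label_sub_ge_le {q : ℝ} (h₁nn : 0 ≤ p₁) (h₁int : ∫ x, p₁ x = 1)
    (h₀nn : 0 ≤ p₀) (h₀int : ∫ x, p₀ x = 1) (hq : q ∈ Set.Icc (0 : ℝ) 1) (n : ℕ) {ε : ℝ}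
    (hε : 0 ≤ ε) :
    (Measure.pi fun _ : Fin n => jointMeasure d p₁ p₀ q).real
        {S | n * ε ≤ |∑ i, ((if (S i).2 = true then (1 : ℝ) else 0) - q)|} ≤
      2 * Real.exp (-2 * n * ε ^ 2) := by
  have := isProbabilityMeasure_jointMeasure_s9 h₁nn h₁int h₀nn h₀int hq
  have := measureReal_abs_sum_sub_integral_ge_le (jointMeasure d p₁ p₀ q) measurable_label
    (fun z => by by_cases h : z.2 = true <;> simp [h]) n hε
  rwa [integral_label_jointMeasure h₁nn h₁int hq.1] at this

def riskDensity (p₁ p₀ : (Fin d → ℝ) → ℝ) (q q' : ℝ) (x : Fin d → ℝ) : ℝ :=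
  if q' * p₁ x < (1 - q') * p₀ x then q * p₁ x else (1 - q) * p₀ x

lemma riskDensity_eq_or_mem_margin {θ c q q' : ℝ} (hθ : 0 < θ) (hq : q ∈ Set.Icc θ (1 - θ))
    (hq' : q' ∈ Set.Icc θ (1 - θ)) (hclose : |q' - q| ≤ 4 * θ * (1 - θ) * c)
    (h₁nn : 0 ≤ p₁) (h₀nn : 0 ≤ p₀) (x : Fin d → ℝ) :
    riskDensity p₁ p₀ q q' x = riskDensity p₁ p₀ q q x ∨
      (0 < |eta d p₁ p₀ q x - 1 / 2| ∧ |eta d p₁ p₀ q x - 1 / 2| ≤ c) := by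
  have hq0 : 0 ≤ q := hθ.le.trans hq.1
  have h1q : 0 ≤ 1 - q := by linarith [hq.2]
  have ha := mul_nonneg hq0 (h₁nn x)
  have hb := mul_nonneg h1q (h₀nn x)
  by_cases hab : q * p₁ x = (1 - q) * p₀ x
  · left
    unfold riskDensity
    split_ifs <;> linarith
  refine or_iff_not_imp_left.2 fun hne => abs_div_add_sub_half_mem_Ioc ha hb hab ?_
  unfold riskDensity at hne
  by_cases hq'x : q' * p₁ x < (1 - q') * p₀ x <;> by_cases hqx : q * p₁ x < (1 - q) * p₀ x <;>
    simp only [hq'x, hqx, if_true, if_false, not_true] at hne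
  · exact abs_sub_le_of_decision_flip hθ hq hq' hclose (h₁nn x) (h₀nn x) hq'x.le (not_lt.1 hqx)
  · have hcompl : ∀ r ∈ Set.Icc θ (1 - θ), 1 - r ∈ Set.Icc θ (1 - θ) :=
      fun r hr => ⟨by linarith [hr.2], by linarith [hr.1]⟩
    have key := abs_sub_le_of_decision_flip (t := p₀ x) (s := p₁ x) hθ (hcompl q hq)
      (hcompl q' hq') (by rwa [sub_sub_sub_cancel_left, abs_sub_comm]) (h₀nn x) (h₁nn x)
      (by rw [sub_sub_cancel]; exact not_lt.1 hq'x) (by rw [sub_sub_cancel]; exact hqx.le)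
    rwa [sub_sub_cancel, abs_sub_comm, add_comm] at key

lemma risk_eq_integral_riskDensity (h₁m : Measurable p₁) (h₁int : ∫ x, p₁ x = 1)
    (h₀m : Measurable p₀) (h₀int : ∫ x, p₀ x = 1) (q q' : ℝ) :
    risk d p₁ p₀ q q' = ∫ x, riskDensity p₁ p₀ q q' x := by
  have hlt : MeasurableSet {x | q' * p₁ x < (1 - q') * p₀ x} :=
    measurableSet_lt (h₁m.const_mul q') (h₀m.const_mul (1 - q'))
  have hle : MeasurableSet {x | (1 - q') * p₀ x ≤ q' * p₁ x} :=
    measurableSet_le (h₀m.const_mul (1 - q')) (h₁m.const_mul q')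
  rw [risk, P1, P0, ← integral_const_mul, ← integral_const_mul,
    ← integral_add ((integrable_ite_zero (integrable_of_integral_eq_one h₁int) hlt).const_mul q)
      ((integrable_ite_zero (integrable_of_integral_eq_one h₀int) hle).const_mul (1 - q))]
  congr 1 with x
  by_cases h : q' * p₁ x < (1 - q') * p₀ x
  · simp [riskDensity, h, not_le.2 h]
  · simp [riskDensity, h, not_lt.1 h]

lemma risk_nonneg (h₁nn : 0 ≤ p₁) (h₀nn : 0 ≤ p₀) {q : ℝ} (hq : q ∈ Set.Icc (0 : ℝ) 1)
    (q' : ℝ) : 0 ≤ risk d p₁ p₀ q q' := by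
  have hP1 : 0 ≤ P1 d p₁ p₀ q' := integral_nonneg fun x => by split_ifs; exacts [h₁nn x, le_rfl]
  have hP0 : 0 ≤ P0 d p₁ p₀ q' := integral_nonneg fun x => by split_ifs; exacts [h₀nn x, le_rfl]
  exact add_nonneg (mul_nonneg hq.1 hP1) (mul_nonneg (sub_nonneg.2 hq.2) hP0)

lemma risk_le_one (h₁m : Measurable p₁) (h₁nn : 0 ≤ p₁) (h₁int : ∫ x, p₁ x = 1)
    (h₀m : Measurable p₀) (h₀nn : 0 ≤ p₀) (h₀int : ∫ x, p₀ x = 1) {q : ℝ}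
    (hq : q ∈ Set.Icc (0 : ℝ) 1) (q' : ℝ) : risk d p₁ p₀ q q' ≤ 1 := by
  have hI₁ := (integrable_of_integral_eq_one h₁int).const_mul q
  have hI₀ := (integrable_of_integral_eq_one h₀int).const_mul (1 - q)
  have hdom : ∀ x, 0 ≤ riskDensity p₁ p₀ q q' x ∧
      riskDensity p₁ p₀ q q' x ≤ q * p₁ x + (1 - q) * p₀ x := by
    intro x
    have ha := mul_nonneg hq.1 (h₁nn x)
    have hb := mul_nonneg (sub_nonneg.2 hq.2) (h₀nn x)
    unfold riskDensity
    split_ifs <;> constructor <;> linarith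
  calc risk d p₁ p₀ q q' = ∫ x, riskDensity p₁ p₀ q q' x :=
        risk_eq_integral_riskDensity h₁m h₁int h₀m h₀int q q'
    _ ≤ ∫ x, (q * p₁ x + (1 - q) * p₀ x) :=
        integral_mono_of_nonneg (ae_of_all _ fun x => (hdom x).1) (hI₁.add hI₀)
          (ae_of_all _ fun x => (hdom x).2)
    _ = 1 := by
        rw [integral_add hI₁ hI₀, integral_const_mul, integral_const_mul, h₁int, h₀int]
        ring

lemma ae_mixture_nonpos_of_margX_eq_zero (h₁m : Measurable p₁) (h₀m : Measurable p₀) {q : ℝ}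
    {s : Set (Fin d → ℝ)} (hs : margX d p₁ p₀ q s = 0) :
    ∀ᵐ x, x ∈ s → q * p₁ x + (1 - q) * p₀ x ≤ 0 := by
  rw [margX, withDensity_apply_eq_zero (by fun_prop), measure_eq_zero_iff_ae_notMem] at hs
  filter_upwards [hs] with x hx hxs
  by_contra hpos
  exact hx ⟨by simpa using not_le.1 hpos, hxs⟩

lemma risk_eq_of_abs_sub_le {θ c q q' : ℝ} (hθ : 0 < θ)
    (h₁m : Measurable p₁) (h₁nn : 0 ≤ p₁) (h₁int : ∫ x, p₁ x = 1)
    (h₀m : Measurable p₀) (h₀nn : 0 ≤ p₀) (h₀int : ∫ x, p₀ x = 1)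
    (hq : q ∈ Set.Icc θ (1 - θ)) (hq' : q' ∈ Set.Icc θ (1 - θ))
    (hMA : margX d p₁ p₀ q
        {x | 0 < |eta d p₁ p₀ q x - 1 / 2| ∧ |eta d p₁ p₀ q x - 1 / 2| ≤ c} = 0)
    (hclose : |q' - q| ≤ 4 * θ * (1 - θ) * c) :
    risk d p₁ p₀ q q' = risk d p₁ p₀ q q := by
  rw [risk_eq_integral_riskDensity h₁m h₁int h₀m h₀int,
    risk_eq_integral_riskDensity h₁m h₁int h₀m h₀int]
  refine integral_congr_ae ((ae_mixture_nonpos_of_margX_eq_zero h₁m h₀m hMA).mono fun x hx => ?_)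
  rcases riskDensity_eq_or_mem_margin hθ hq hq' hclose h₁nn h₀nn x with h | hxA
  · exact h
  have ha := mul_nonneg (hθ.le.trans hq.1) (h₁nn x)
  have hb := mul_nonneg (by linarith [hq.2] : (0 : ℝ) ≤ 1 - q) (h₀nn x)
  have hx0 := hx hxA
  unfold riskDensity
  split_ifs <;> linarith

lemma trimmedMLE_mem_Icc {n : ℕ} {θ : ℝ} (hθ : θ ≤ 1 - θ) (S : Fin n → (Fin d → ℝ) × Bool) :
    trimmedMLE d θ n S ∈ Set.Icc θ (1 - θ) :=
  ⟨le_max_left _ _, max_le hθ (min_le_left _ _)⟩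

lemma abs_trimmedMLE_sub_le {θ q ε : ℝ} (hq : q ∈ Set.Icc θ (1 - θ)) {n : ℕ}
    (S : Fin n → (Fin d → ℝ) × Bool)
    (h : |∑ i, ((if (S i).2 = true then (1 : ℝ) else 0) - q)| < n * ε) :
    |trimmedMLE d θ n S - q| ≤ ε := by
  have hn : (0 : ℝ) < n := by
    rcases Nat.eq_zero_or_pos n with rfl | hn
    · simp at h
    · exact_mod_cast hn
  set k := ∑ i, if (S i).2 = true then (1 : ℝ) else 0
  rw [Finset.sum_sub_distrib, Finset.sum_const, Finset.card_univ, Fintype.card_fin,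
    nsmul_eq_mul] at h
  calc |trimmedMLE d θ n S - q| ≤ |k / n - q| := abs_max_min_sub_le hq _
    _ = |k - n * q| / n := by
        rw [← abs_of_pos hn, ← abs_div, abs_of_pos hn, sub_div, mul_div_cancel_left₀ _ hn.ne']
    _ ≤ ε := by
        rw [div_le_iff₀ hn]
        linarith

end Model

theorem stmt_9_general (d : ℕ) (θ : ℝ) (hθ : θ ∈ Set.Ioo (0 : ℝ) (1 / 2))
    (c : ℝ) (hc : 0 < c)
    (p₁ p₀ : (Fin d → ℝ) → ℝ) (q : ℝ)
    (h₁m : Measurable p₁) (h₁nn : ∀ x, 0 ≤ p₁ x) (h₁int : ∫ x, p₁ x = 1)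
    (h₀m : Measurable p₀) (h₀nn : ∀ x, 0 ≤ p₀ x) (h₀int : ∫ x, p₀ x = 1)
    (hq : q ∈ Set.Icc θ (1 - θ))
    (hMA : margX d p₁ p₀ q
        {x | 0 < |eta d p₁ p₀ q x - 1 / 2| ∧ |eta d p₁ p₀ q x - 1 / 2| ≤ c} = 0)
    (n : ℕ) :
    (∫ S, risk d p₁ p₀ q (trimmedMLE d θ n S)
        ∂(Measure.pi fun _ : Fin n => jointMeasure d p₁ p₀ q)) -
      risk d p₁ p₀ q q ≤
      2 * Real.exp (-2 * n * c ^ 2 / (1 / (4 * θ * (1 - θ))) ^ 2) := by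
  have hq01 : q ∈ Set.Icc (0 : ℝ) 1 := ⟨hθ.1.le.trans hq.1, by linarith [hq.2, hθ.1]⟩
  have := isProbabilityMeasure_jointMeasure_s9 h₁nn h₁int h₀nn h₀int hq01
  set ε := 4 * θ * (1 - θ) * c
  have hε : 0 ≤ ε :=
    mul_nonneg (mul_nonneg (mul_nonneg zero_le_four hθ.1.le) (by linarith [hθ.2])) hc.le
  set E := {S : Fin n → (Fin d → ℝ) × Bool |
    n * ε ≤ |∑ i, ((if (S i).2 = true then (1 : ℝ) else 0) - q)|}
  have hE : MeasurableSet E := measurableSet_le measurable_const <| .abs <|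
    Finset.measurable_sum _ fun i _ => (measurable_label.comp (measurable_pi_apply i)).sub_const q
  refine (integral_sub_le_measureReal_of_le_add_indicator hE
    (fun S => risk_nonneg h₁nn h₀nn hq01 _) fun S => ?_).trans
    ((measureReal_abs_sum_label_sub_ge_le h₁nn h₁int h₀nn h₀int hq01 n hε).trans_eq ?_)
  · by_cases hS : S ∈ E
    · rw [Set.indicator_of_mem hS, Pi.one_apply]
      linarith [risk_le_one h₁m h₁nn h₁int h₀m h₀nn h₀int hq01 (trimmedMLE d θ n S),
        risk_nonneg h₁nn h₀nn hq01 q]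
    · rw [Set.indicator_of_notMem hS, add_zero, risk_eq_of_abs_sub_le hθ.1 h₁m h₁nn h₁int h₀m
        h₀nn h₀int hq (trimmedMLE_mem_Icc (hq.1.trans hq.2) S) hMA
        (abs_trimmedMLE_sub_le hq S (not_le.1 hS))]
  · rw [one_div, inv_pow, div_inv_eq_mul]
    congr 2
    ring

/-- Theorem 5: exponential rates when `α = ∞`, i.e. when
`P_X(0 < |η(X) − 1/2| ≤ c) = 0`: the excess risk of the trimmed MLE is at most
`2·exp(−2nc²/L²)` with `L = 1/(4θ(1−θ))`. -/
theorem stmt_9 (d : ℕ) (hd : 1 ≤ d) (θ : ℝ) (hθ : θ ∈ Set.Ioo (0 : ℝ) (1 / 2))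
    (c : ℝ) (hc : 0 < c)
    (p₁ p₀ : (Fin d → ℝ) → ℝ) (q : ℝ)
    (h₁m : Measurable p₁) (h₁nn : ∀ x, 0 ≤ p₁ x) (h₁int : ∫ x, p₁ x = 1)
    (h₀m : Measurable p₀) (h₀nn : ∀ x, 0 ≤ p₀ x) (h₀int : ∫ x, p₀ x = 1)
    (hq : q ∈ Set.Icc θ (1 - θ))
    (hMA : margX d p₁ p₀ q
        {x | 0 < |eta d p₁ p₀ q x - 1 / 2| ∧ |eta d p₁ p₀ q x - 1 / 2| ≤ c} = 0)
    (n : ℕ) (hn : 1 ≤ n) :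
    (∫ S, risk d p₁ p₀ q (trimmedMLE d θ n S)
        ∂(Measure.pi fun _ : Fin n => jointMeasure d p₁ p₀ q)) -
      risk d p₁ p₀ q q ≤
      2 * Real.exp (-2 * n * c ^ 2 / (1 / (4 * θ * (1 - θ))) ^ 2) :=
  stmt_9_general d θ hθ c hc p₁ p₀ q h₁m h₁nn h₁int h₀m h₀nn h₀int hq hMA n
end
end

section
/- (Lemma 2, plug-in rule excess risk bound) For every α > 0 and constants C₀, C₁, C₂ > 0 there exists a constant C > 0, depending only on α, C₀, C₁, C₂, such that the following holds. Let π be a probability distribution of (X,Y) on ℝ^d × {0,1} with regression function η(x) = π(Y = 1 | X = x) and marginal P_X, satisfying P_X(0 < |η(X) − 1/2| ≤ t) ≤ C₀·t^α for all t > 0. Let n ≥ 1, aₙ > 0, and let η̂ₙ : ℝ^d × (ℝ^d × {0,1})ⁿ → ℝ be a measurable estimator of η based on n i.i.d. samples S ~ π⊗n such that for P_X-almost every x and every δ > 0, π⊗n({S : |η̂ₙ(x,S) − η(x)| ≥ δ}) ≤ C₁·exp(−C₂·aₙ·δ²). Then the plug-in classifier f̂ₙ(x,S) = 1{η̂ₙ(x,S)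 ≥ 1/2} satisfies E_S[π({(x,y) : f̂ₙ(x,S) ≠ y})] − R* ≤ C·aₙ^{−(1+α)/2}, where R* = π({(x,y) : 1{η(x) ≥ 1/2} ≠ y}) is the Bayes risk. -/
/-!
The excess risk of the plug-in rule is `E_S ∫ 2|η - 1/2| 1{f̂ ≠ f*} dP_X`, and a disagreement
of the two classifiers at `x` forces `|η̂(x, S) - η(x)| ≥ |η(x) - 1/2|`. Cut `{η ≠ 1/2}` into the
core `{|η - 1/2| < t}` and the dyadic shells `{t 2^j ≤ |η - 1/2| < t 2^(j+1)}`, with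
`t ≍ aₙ^(-1/2)`. The margin condition bounds the core by `C₀ t^(1+α)`; on the `j`-th shell the
concentration bound supplies a factor `exp(-C₂ aₙ t² 4^j)`, which beats the growth
`2^((j+1)(1+α))` allowed by the margin condition, so the shells add up to `O(t^(1+α))`.
-/

open MeasureTheory

noncomputable section

/-- `η` is a (measurable version of the) regression function of the distribution `π` of
`(X,Y)`: for every measurable `A`, `π(A × {1}) = ∫_A η dP_X` where `P_X` is the first
marginal of `π`. -/
def IsRegressionFunction (d : ℕ) (π : Measure ((Fin d → ℝ) × Bool))
    (η : (Fin d → ℝ) → ℝ) : Prop :=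
  Measurable η ∧ (∀ x, η x ∈ Set.Icc (0 : ℝ) 1) ∧
    ∀ A : Set (Fin d → ℝ), MeasurableSet A →
      π (A ×ˢ ({true} : Set Bool)) = ∫⁻ x in A, ENNReal.ofReal (η x) ∂(π.map Prod.fst)

open Set
open scoped ENNReal

lemma measurableSet_setOf_ne {γ : Type*} [MeasurableSpace γ] {P Q : γ → Prop}
    (hP : MeasurableSet {q | P q}) (hQ : MeasurableSet {q | Q q}) :
    MeasurableSet {q | P q ≠ Q q} := by
  convert hP.symmDiff hQ using 1
  ext q
  simp only [mem_ofPred_eq, mem_symmDiff, ne_eq, eq_iff_iff]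
  tauto

lemma abs_sub_le_of_threshold_ne {a b c : ℝ} (h : (c ≤ a) ≠ (c ≤ b)) : |b - c| ≤ |a - b| := by
  by_cases ha : c ≤ a <;> by_cases hb : c ≤ b
  · exact absurd (propext (iff_of_true ha hb)) h
  · rw [abs_of_neg (by linarith), abs_of_nonneg (by linarith)]; linarith
  · rw [abs_of_nonneg (by linarith), abs_of_neg (by linarith)]; linarith
  · exact absurd (propext (iff_of_false ha hb)) h

lemma rpow_two_pow_succ_le_exp {c : ℝ} (hc : 0 ≤ c) (j : ℕ) :
    ((2 : ℝ) ^ (j + 1)) ^ c ≤ Real.exp (c * 4 ^ j) := by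
  have h : (2 : ℝ) ^ (j + 1) ≤ Real.exp (4 ^ j) :=
    calc (2 : ℝ) ^ (j + 1) ≤ Real.exp 1 ^ (j + 1) :=
          pow_le_pow_left₀ (by norm_num) (by linarith [Real.add_one_le_exp 1]) _
      _ = Real.exp (j + 1) := by rw [← Real.exp_nat_mul]; push_cast; ring_nf
      _ ≤ Real.exp (4 ^ j) := Real.exp_le_exp.2 (by exact_mod_cast Nat.lt_pow_self (by norm_num))
  calc ((2 : ℝ) ^ (j + 1)) ^ c ≤ Real.exp (4 ^ j) ^ c := Real.rpow_le_rpow (by positivity) h hc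
    _ = Real.exp (c * 4 ^ j) := by rw [← Real.exp_mul, mul_comm]

lemma two_pow_succ_mul_rpow_mul_exp_le {α b t : ℝ} (hα : 0 ≤ α) (hbt : 2 + α ≤ b * t ^ 2)
    (j : ℕ) :
    2 ^ (j + 1) * ((2 : ℝ) ^ (j + 1)) ^ α * Real.exp (-b * (t * 2 ^ j) ^ 2) ≤
      ((2 : ℝ) ^ (j + 1))⁻¹ := by
  set u : ℝ := 2 ^ (j + 1)
  have hexp : Real.exp (-b * (t * 2 ^ j) ^ 2) ≤ Real.exp (-((2 + α) * 4 ^ j)) := by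
    refine Real.exp_le_exp.2 ?_
    have h4 : ((2 : ℝ) ^ j) ^ 2 = 4 ^ j := by rw [← pow_mul, mul_comm, pow_mul]; norm_num
    nlinarith [pow_pos (by norm_num : (0 : ℝ) < 4) j]
  have hu : u ^ (2 + α) = u * u ^ α * u := by
    rw [Real.rpow_add (by positivity), Real.rpow_two]; ring
  calc u * u ^ α * Real.exp (-b * (t * 2 ^ j) ^ 2)
      = u ^ (2 + α) * Real.exp (-b * (t * 2 ^ j) ^ 2) * u⁻¹ := by rw [hu]; field_simp
    _ ≤ Real.exp ((2 + α) * 4 ^ j) * Real.exp (-((2 + α) * 4 ^ j)) * u⁻¹ := by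
        gcongr
        exact rpow_two_pow_succ_le_exp (by linarith) j
    _ = u⁻¹ := by rw [← Real.exp_add, add_neg_cancel, Real.exp_zero, one_mul]

section DyadicShells

variable {X : Type*} {m : X → ℝ} {t : ℝ}

def dyadicShell (m : X → ℝ) (t : ℝ) (j : ℕ) : Set X :=
  {x | t * 2 ^ j ≤ m x ∧ m x < t * 2 ^ (j + 1)}

lemma setOf_pos_subset_union_dyadicShell (ht : 0 < t) :
    {x | 0 < m x} ⊆ {x | 0 < m x ∧ m x < t} ∪ ⋃ j, dyadicShell m t j := by
  intro x hx
  by_cases hxt : m x < t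
  · exact Or.inl ⟨hx, hxt⟩
  · obtain ⟨j, hj, hj'⟩ := exists_nat_pow_near ((one_le_div ht).2 (not_lt.1 hxt)) one_lt_two
    rw [le_div_iff₀ ht] at hj
    rw [div_lt_iff₀ ht] at hj'
    exact Or.inr (mem_iUnion.2 ⟨j, by linarith, by linarith⟩)

variable [MeasurableSpace X] {μ : Measure X}

lemma lintegral_le_add_tsum_dyadicShell (ht : 0 < t) {f : X → ℝ≥0∞}
    (hf : Function.support f ⊆ {x | 0 < m x}) :
    ∫⁻ x, f x ∂μ ≤ ∫⁻ x in {x | 0 < m x ∧ m x < t}, f x ∂μ +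
      ∑' j, ∫⁻ x in dyadicShell m t j, f x ∂μ :=
  calc ∫⁻ x, f x ∂μ = ∫⁻ x in {x | 0 < m x}, f x ∂μ :=
        (setLIntegral_eq_of_support_subset hf).symm
    _ ≤ _ := lintegral_mono_set (setOf_pos_subset_union_dyadicShell ht)
    _ ≤ _ := lintegral_union_le _ _ _
    _ ≤ _ := by gcongr; exact lintegral_iUnion_le _ _

variable {p : X → ℝ≥0∞} {α C₀ C₁ b : ℝ}

lemma setLIntegral_pos_lt_le_of_margin (hp : ∀ x, p x ≤ 1) (ht : 0 < t)
    (hmargin : μ {x | 0 < m x ∧ m x ≤ t} ≤ ENNReal.ofReal (C₀ * t ^ α)) :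
    ∫⁻ x in {x | 0 < m x ∧ m x < t}, ENNReal.ofReal (2 * m x) * p x ∂μ ≤
      ENNReal.ofReal (2 * C₀ * t ^ (1 + α)) :=
  calc ∫⁻ x in {x | 0 < m x ∧ m x < t}, ENNReal.ofReal (2 * m x) * p x ∂μ
      ≤ ∫⁻ x in {x | 0 < m x ∧ m x < t}, ENNReal.ofReal (2 * t) ∂μ :=
        setLIntegral_mono measurable_const fun x hx =>
          mul_le_of_le_of_le_one (ENNReal.ofReal_le_ofReal (by linarith [hx.2])) (hp x)
    _ = ENNReal.ofReal (2 * t) * μ {x | 0 < m x ∧ m x < t} := setLIntegral_const _ _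
    _ ≤ ENNReal.ofReal (2 * t) * ENNReal.ofReal (C₀ * t ^ α) := by
        gcongr
        exact (measure_mono (t := {x | 0 < m x ∧ m x ≤ t}) fun x hx => ⟨hx.1, hx.2.le⟩).trans
          hmargin
    _ = ENNReal.ofReal (2 * C₀ * t ^ (1 + α)) := by
        rw [← ENNReal.ofReal_mul (by positivity), Real.rpow_add ht, Real.rpow_one]
        ring_nf

lemma setLIntegral_dyadicShell_le_of_margin (hα : 0 ≤ α) (hC₀ : 0 ≤ C₀) (hC₁ : 0 ≤ C₁)
    (ht : 0 < t) (hbt : 2 + α ≤ b * t ^ 2)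
    (hmargin : ∀ s, 0 < s → μ {x | 0 < m x ∧ m x ≤ s} ≤ ENNReal.ofReal (C₀ * s ^ α))
    (hconc : ∀ᵐ x ∂μ, ∀ δ, 0 < δ → δ ≤ m x →
      p x ≤ ENNReal.ofReal (C₁ * Real.exp (-b * δ ^ 2))) (j : ℕ) :
    ∫⁻ x in dyadicShell m t j, ENNReal.ofReal (2 * m x) * p x ∂μ ≤
      ENNReal.ofReal (2 * C₀ * C₁ * t ^ (1 + α)) * 2⁻¹ ^ (j + 1) := by
  set u : ℝ := 2 ^ (j + 1)
  set δ : ℝ := t * 2 ^ j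
  have hδ : 0 < δ := by positivity
  have hreal : 2 * (t * u) * (C₁ * Real.exp (-b * δ ^ 2)) * (C₀ * (t * u) ^ α) ≤
      2 * C₀ * C₁ * t ^ (1 + α) * u⁻¹ := by
    rw [Real.mul_rpow ht.le (by positivity), Real.rpow_add ht, Real.rpow_one]
    calc _ = 2 * C₀ * C₁ * (t * t ^ α) * (u * u ^ α * Real.exp (-b * δ ^ 2)) := by ring
      _ ≤ _ := by gcongr; exact two_pow_succ_mul_rpow_mul_exp_le hα hbt j
  calc ∫⁻ x in dyadicShell m t j, ENNReal.ofReal (2 * m x) * p x ∂μ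
      ≤ ∫⁻ x in dyadicShell m t j,
          ENNReal.ofReal (2 * (t * u)) * ENNReal.ofReal (C₁ * Real.exp (-b * δ ^ 2)) ∂μ := by
        refine setLIntegral_mono_ae aemeasurable_const ?_
        filter_upwards [hconc] with x hx hxs
        exact mul_le_mul' (ENNReal.ofReal_le_ofReal (by linarith [hxs.2])) (hx _ hδ hxs.1)
    _ = ENNReal.ofReal (2 * (t * u)) * ENNReal.ofReal (C₁ * Real.exp (-b * δ ^ 2)) *
          μ (dyadicShell m t j) := setLIntegral_const _ _
    _ ≤ ENNReal.ofReal (2 * (t * u)) * ENNReal.ofReal (C₁ * Real.exp (-b * δ ^ 2)) *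
          ENNReal.ofReal (C₀ * (t * u) ^ α) := by
        gcongr
        exact (measure_mono (t := {x | 0 < m x ∧ m x ≤ t * u})
          fun x hx => ⟨hδ.trans_le hx.1, hx.2.le⟩).trans (hmargin _ (by positivity))
    _ ≤ ENNReal.ofReal (2 * C₀ * C₁ * t ^ (1 + α) * u⁻¹) := by
        rw [← ENNReal.ofReal_mul (by positivity), ← ENNReal.ofReal_mul (by positivity)]
        exact ENNReal.ofReal_le_ofReal hreal
    _ = ENNReal.ofReal (2 * C₀ * C₁ * t ^ (1 + α)) * 2⁻¹ ^ (j + 1) := by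
        rw [ENNReal.ofReal_mul (by positivity), ← inv_pow, ENNReal.ofReal_pow (by norm_num),
          ENNReal.ofReal_inv_of_pos (by norm_num), ENNReal.ofReal_ofNat]

theorem lintegral_ofReal_mul_le_of_margin (hp : ∀ x, p x ≤ 1) (hα : 0 ≤ α) (hC₀ : 0 ≤ C₀)
    (hC₁ : 0 ≤ C₁) (ht : 0 < t) (hbt : 2 + α ≤ b * t ^ 2)
    (hmargin : ∀ s, 0 < s → μ {x | 0 < m x ∧ m x ≤ s} ≤ ENNReal.ofReal (C₀ * s ^ α))
    (hconc : ∀ᵐ x ∂μ, ∀ δ, 0 < δ → δ ≤ m x →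
      p x ≤ ENNReal.ofReal (C₁ * Real.exp (-b * δ ^ 2))) :
    ∫⁻ x, ENNReal.ofReal (2 * m x) * p x ∂μ ≤ ENNReal.ofReal (2 * C₀ * (1 + C₁) * t ^ (1 + α)) := by
  have hsupp : Function.support (fun x => ENNReal.ofReal (2 * m x) * p x) ⊆ {x | 0 < m x} :=
    Function.support_subset_iff'.2 fun x (hx : ¬ 0 < m x) => by
      rw [ENNReal.ofReal_of_nonpos (by linarith [not_lt.1 hx]), zero_mul]
  calc ∫⁻ x, ENNReal.ofReal (2 * m x) * p x ∂μ
      ≤ ENNReal.ofReal (2 * C₀ * t ^ (1 + α)) +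
          ∑' j : ℕ, ENNReal.ofReal (2 * C₀ * C₁ * t ^ (1 + α)) * 2⁻¹ ^ (j + 1) :=
        (lintegral_le_add_tsum_dyadicShell ht hsupp).trans <| add_le_add
          (setLIntegral_pos_lt_le_of_margin hp ht (hmargin t ht))
          (ENNReal.tsum_le_tsum
            (setLIntegral_dyadicShell_le_of_margin hα hC₀ hC₁ ht hbt hmargin hconc))
    _ = ENNReal.ofReal (2 * C₀ * (1 + C₁) * t ^ (1 + α)) := by
        rw [ENNReal.tsum_mul_left, ENNReal.tsum_geometric_add_one, ENNReal.one_sub_inv_two,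
          ENNReal.mul_inv_cancel (by norm_num) (by norm_num), mul_one,
          ← ENNReal.ofReal_add (by positivity) (by positivity)]
        ring_nf

end DyadicShells

lemma measurable_measure_setOf_threshold_ne {X Ω : Type*} [MeasurableSpace X] [MeasurableSpace Ω]
    {π : Measure (X × Bool)} [SFinite π] {g : X → Ω → ℝ} (hg : Measurable (Function.uncurry g)) :
    Measurable fun S => π {p | (1 / 2 ≤ g p.1 S) ≠ (p.2 = true)} :=
  measurable_measure_prodMk_left (measurableSet_setOf_ne (P := fun q : Ω × (X × Bool) =>
      1 / 2 ≤ g q.2.1 q.1)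
    (measurableSet_le measurable_const (hg.comp (measurable_snd.fst.prodMk measurable_fst)))
    (measurable_snd.snd (measurableSet_singleton true)))

open scoped Classical in
lemma ite_ofReal_eq_add {e : ℝ} (he : e ∈ Icc (0 : ℝ) 1) (P : Prop) :
    (if P then ENNReal.ofReal (1 - e) else ENNReal.ofReal e) =
      (if 1 / 2 ≤ e then ENNReal.ofReal (1 - e) else ENNReal.ofReal e) +
        if P ≠ (1 / 2 ≤ e) then ENNReal.ofReal (2 * |e - 1 / 2|) else 0 := by
  by_cases hP : P <;> by_cases he2 : 1 / 2 ≤ e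
  · rw [if_pos hP, if_pos he2, if_neg (not_not.2 (propext (iff_of_true hP he2))), add_zero]
  · rw [if_pos hP, if_neg he2, if_pos fun h => he2 ((eq_iff_iff.1 h).1 hP),
      abs_of_neg (by linarith), ← ENNReal.ofReal_add he.1 (by linarith)]
    ring_nf
  · rw [if_neg hP, if_pos he2, if_pos fun h => hP ((eq_iff_iff.1 h).2 he2),
      abs_of_nonneg (by linarith), ← ENNReal.ofReal_add (by linarith [he.2]) (by linarith)]
    ring_nf
  · rw [if_neg hP, if_neg he2, if_neg (not_not.2 (propext (iff_of_false hP he2))), add_zero]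

namespace IsRegressionFunction

variable {d : ℕ} {π : Measure ((Fin d → ℝ) × Bool)} [IsFiniteMeasure π] {η : (Fin d → ℝ) → ℝ}

lemma measure_prod_false (h : IsRegressionFunction d π η) {A : Set (Fin d → ℝ)}
    (hA : MeasurableSet A) :
    π (A ×ˢ {false}) = ∫⁻ x in A, ENNReal.ofReal (1 - η x) ∂(π.map Prod.fst) := by
  have hsplit : π (A ×ˢ {false}) + π (A ×ˢ {true}) = π.map Prod.fst A := by
    rw [Measure.map_apply measurable_fst hA, ← measure_union
      (disjoint_left.2 fun q hf ht => by simp_all) (hA.prod (measurableSet_singleton true))]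
    congr 1
    ext ⟨x, y⟩
    cases y <;> simp
  have hmarginal : π.map Prod.fst A = ∫⁻ x in A, ENNReal.ofReal (1 - η x) ∂(π.map Prod.fst) +
      ∫⁻ x in A, ENNReal.ofReal (η x) ∂(π.map Prod.fst) := by
    rw [← lintegral_add_left (h.1.const_sub 1).ennreal_ofReal,
      setLIntegral_congr_fun hA fun x _ => by
        rw [← ENNReal.ofReal_add (by linarith [(h.2.1 x).2]) (h.2.1 x).1, sub_add_cancel,
          ENNReal.ofReal_one],
      setLIntegral_one]
  rw [h.2.2 A hA] at hsplit
  refine (ENNReal.add_left_inj ?_).1 (hsplit.trans hmarginal)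
  rw [← h.2.2 A hA]
  exact measure_ne_top _ _

lemma measure_setOf_threshold_ne (h : IsRegressionFunction d π η) {g : (Fin d → ℝ) → ℝ}
    (hg : Measurable g) :
    π {p | (1 / 2 ≤ g p.1) ≠ (p.2 = true)} =
      ∫⁻ x, (if 1 / 2 ≤ g x then ENNReal.ofReal (1 - η x) else ENNReal.ofReal (η x))
        ∂(π.map Prod.fst) := by
  set B := {x | 1 / 2 ≤ g x}
  have hB : MeasurableSet B := measurableSet_le measurable_const hg
  have hset : {p : (Fin d → ℝ) × Bool | (1 / 2 ≤ g p.1) ≠ (p.2 = true)} =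
      B ×ˢ {false} ∪ Bᶜ ×ˢ {true} := by
    ext ⟨x, y⟩
    cases y <;> simp [B]
  rw [hset, measure_union (disjoint_left.2 fun q hf ht => ht.1 hf.1)
      (hB.compl.prod (measurableSet_singleton true)), h.measure_prod_false hB, h.2.2 _ hB.compl,
    ← lintegral_add_compl (fun x => if 1 / 2 ≤ g x then ENNReal.ofReal (1 - η x)
      else ENNReal.ofReal (η x)) hB]
  congr 1
  · exact setLIntegral_congr_fun hB fun x hx => (if_pos hx).symm
  · exact setLIntegral_congr_fun hB.compl fun x hx => (if_neg hx).symm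

open scoped Classical in
theorem lintegral_measure_setOf_threshold_ne {Ω : Type*} [MeasurableSpace Ω] {ν : Measure Ω}
    [IsProbabilityMeasure ν] (h : IsRegressionFunction d π η) {g : (Fin d → ℝ) → Ω → ℝ}
    (hg : Measurable (Function.uncurry g)) :
    ∫⁻ S, π {p | (1 / 2 ≤ g p.1 S) ≠ (p.2 = true)} ∂ν =
      π {p | (1 / 2 ≤ η p.1) ≠ (p.2 = true)} + ∫⁻ x, ENNReal.ofReal (2 * |η x - 1 / 2|) *
        ν {S | (1 / 2 ≤ g x S) ≠ (1 / 2 ≤ η x)} ∂(π.map Prod.fst) := by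
  have hη : Measurable η := h.1
  set μ := π.map Prod.fst
  set bayes : (Fin d → ℝ) → ℝ≥0∞ := fun x =>
    if 1 / 2 ≤ η x then ENNReal.ofReal (1 - η x) else ENNReal.ofReal (η x)
  set excess : Ω → (Fin d → ℝ) → ℝ≥0∞ := fun S x =>
    if (1 / 2 ≤ g x S) ≠ (1 / 2 ≤ η x) then ENNReal.ofReal (2 * |η x - 1 / 2|) else 0
  have hmismatch : MeasurableSet {q : Ω × (Fin d → ℝ) | (1 / 2 ≤ g q.2 q.1) ≠ (1 / 2 ≤ η q.2)} :=
    measurableSet_setOf_ne (measurableSet_le measurable_const (hg.comp measurable_swap))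
      (measurableSet_le measurable_const (hη.comp measurable_snd))
  have hexcess : Measurable (Function.uncurry excess) :=
    Measurable.ite hmismatch (by fun_prop) measurable_const
  have hbayes : Measurable bayes :=
    Measurable.ite (measurableSet_le measurable_const hη) (by fun_prop) (by fun_prop)
  calc ∫⁻ S, π {p | (1 / 2 ≤ g p.1 S) ≠ (p.2 = true)} ∂ν
      = ∫⁻ S, ∫⁻ x, bayes x + excess S x ∂μ ∂ν := by
        refine lintegral_congr fun S => ?_
        rw [h.measure_setOf_threshold_ne (g := fun x => g x S) (hg.comp measurable_prodMk_right)]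
        exact lintegral_congr fun x => ite_ofReal_eq_add (h.2.1 x) _
    _ = ∫⁻ x, bayes x ∂μ + ∫⁻ S, ∫⁻ x, excess S x ∂μ ∂ν := by
        simp_rw [lintegral_add_left hbayes]
        rw [lintegral_add_left measurable_const, lintegral_const, measure_univ, mul_one]
    _ = _ := by
        rw [← h.measure_setOf_threshold_ne hη, lintegral_lintegral_swap hexcess.aemeasurable]
        congr 1
        refine lintegral_congr fun x => ?_
        rw [← lintegral_indicator_const (s := {S | (1 / 2 ≤ g x S) ≠ (1 / 2 ≤ η x)})
          (hmismatch.preimage measurable_prodMk_right)]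
        simp only [excess, indicator_apply, mem_ofPred_eq]

end IsRegressionFunction

theorem stmt_11_general (d : ℕ) (α : ℝ) (hα : 0 < α)
    (C₀ C₁ C₂ : ℝ) (hC₀ : 0 < C₀) (hC₁ : 0 < C₁) (hC₂ : 0 < C₂) :
    ∃ C : ℝ, 0 < C ∧
      ∀ π : Measure ((Fin d → ℝ) × Bool), IsProbabilityMeasure π →
        ∀ η : (Fin d → ℝ) → ℝ, IsRegressionFunction d π η →
          (∀ t : ℝ, 0 < t →
            ((π.map Prod.fst)
                {x | 0 < |η x - 1 / 2| ∧ |η x - 1 / 2| ≤ t}).toReal ≤ C₀ * t ^ α) →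
          ∀ n : ℕ, 1 ≤ n → ∀ aₙ : ℝ, 0 < aₙ →
            ∀ ηhat : (Fin d → ℝ) → (Fin n → (Fin d → ℝ) × Bool) → ℝ,
              Measurable (Function.uncurry ηhat) →
              (∀ᵐ x ∂(π.map Prod.fst), ∀ δ : ℝ, 0 < δ →
                ((Measure.pi fun _ : Fin n => π)
                    {S | δ ≤ |ηhat x S - η x|}).toReal ≤
                  C₁ * Real.exp (-C₂ * aₙ * δ ^ 2)) →
              (∫ S, (π {p | (1 / 2 ≤ ηhat p.1 S) ≠ (p.2 = true)}).toReal
                  ∂(Measure.pi fun _ : Fin n => π)) -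
                (π {p | (1 / 2 ≤ η p.1) ≠ (p.2 = true)}).toReal ≤
                C * aₙ ^ (-((1 + α) / 2)) := by
  refine ⟨2 * C₀ * (1 + C₁) * ((2 + α) / C₂) ^ ((1 + α) / 2), by positivity, ?_⟩
  intro π _ η hη hmargin n _ aₙ haₙ ηhat hηhat hconc
  set t := Real.sqrt ((2 + α) / (C₂ * aₙ)) with ht_def
  have ht : 0 < t := Real.sqrt_pos.2 (by positivity)
  have hbt : 2 + α ≤ C₂ * aₙ * t ^ 2 := by
    rw [Real.sq_sqrt (by positivity), mul_div_cancel₀ _ (by positivity)]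
  have htα : t ^ (1 + α) = ((2 + α) / C₂) ^ ((1 + α) / 2) * aₙ ^ (-((1 + α) / 2)) := by
    rw [ht_def, Real.sqrt_eq_rpow, ← Real.rpow_mul (by positivity), div_mul_eq_div_div,
      Real.div_rpow (by positivity) haₙ.le, Real.rpow_neg haₙ.le, div_eq_mul_inv]
    ring_nf
  have hexcess := lintegral_ofReal_mul_le_of_margin (m := fun x => |η x - 1 / 2|)
    (p := fun x => (Measure.pi fun _ : Fin n => π) {S | (1 / 2 ≤ ηhat x S) ≠ (1 / 2 ≤ η x)})
    (fun x => prob_le_one) hα.le hC₀.le hC₁.le ht hbt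
    (fun s hs => (ENNReal.le_ofReal_iff_toReal_le (measure_ne_top _ _) (by positivity)).2
      (hmargin s hs))
    (by
      filter_upwards [hconc] with x hx δ hδ hδx
      refine (measure_mono fun S hS => hδx.trans (abs_sub_le_of_threshold_ne hS)).trans ?_
      rw [← neg_mul]
      exact (ENNReal.le_ofReal_iff_toReal_le (measure_ne_top _ _) (by positivity)).2 (hx δ hδ))
  rw [integral_toReal (measurable_measure_setOf_threshold_ne hηhat).aemeasurable
      (ae_of_all _ fun _ => measure_lt_top _ _), hη.lintegral_measure_setOf_threshold_ne hηhat,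
    ENNReal.toReal_add (measure_ne_top _ _) (ne_top_of_le_ne_top ENNReal.ofReal_ne_top hexcess),
    add_sub_cancel_left]
  calc _ ≤ 2 * C₀ * (1 + C₁) * t ^ (1 + α) :=
        ENNReal.toReal_le_of_le_ofReal (by positivity) hexcess
    _ = _ := by rw [htα]; ring

/-- Lemma 2 (Audibert–Tsybakov plug-in lemma): under the margin assumption and an
exponential concentration bound for the regression-function estimator, the plug-in
classifier `1{η̂ₙ ≥ 1/2}` has excess risk at most `C·aₙ^{-(1+α)/2}`. -/
theorem stmt_11 (d : ℕ) (hd : 1 ≤ d) (α : ℝ) (hα : 0 < α)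
    (C₀ C₁ C₂ : ℝ) (hC₀ : 0 < C₀) (hC₁ : 0 < C₁) (hC₂ : 0 < C₂) :
    ∃ C : ℝ, 0 < C ∧
      ∀ π : Measure ((Fin d → ℝ) × Bool), IsProbabilityMeasure π →
        ∀ η : (Fin d → ℝ) → ℝ, IsRegressionFunction d π η →
          (∀ t : ℝ, 0 < t →
            ((π.map Prod.fst)
                {x | 0 < |η x - 1 / 2| ∧ |η x - 1 / 2| ≤ t}).toReal ≤ C₀ * t ^ α) →
          ∀ n : ℕ, 1 ≤ n → ∀ aₙ : ℝ, 0 < aₙ →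
            ∀ ηhat : (Fin d → ℝ) → (Fin n → (Fin d → ℝ) × Bool) → ℝ,
              Measurable (Function.uncurry ηhat) →
              (∀ᵐ x ∂(π.map Prod.fst), ∀ δ : ℝ, 0 < δ →
                ((Measure.pi fun _ : Fin n => π)
                    {S | δ ≤ |ηhat x S - η x|}).toReal ≤
                  C₁ * Real.exp (-C₂ * aₙ * δ ^ 2)) →
              (∫ S, (π {p | (1 / 2 ≤ ηhat p.1 S) ≠ (p.2 = true)}).toReal
                  ∂(Measure.pi fun _ : Fin n => π)) -
                (π {p | (1 / 2 ≤ η p.1) ≠ (p.2 = true)}).toReal ≤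
                C * aₙ ^ (-((1 + α) / 2)) :=
  stmt_11_general d α hα C₀ C₁ C₂ hC₀ hC₁ hC₂
end
end

section
/- (Lemma 5, KL divergence between Bernoulli distributions) Let P and Q be Bernoulli distributions with success probabilities 1/2 − p and 1/2 − q respectively, where |p| ≤ 1/4 and |q| ≤ 1/4. Then KL(P ‖ Q) ≤ 8·(p − q)². -/
/-!
Applying `log x ≤ x - 1` to both terms bounds the Bernoulli KL divergence by the χ²-divergence
`(a - b)² / (b (1 - b))`. When `b = 1/2 - q` with `|q| ≤ 1/4`, the variance `b (1 - b)` is at least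
`3/16 ≥ 1/8`.
-/

open Real

lemma mul_log_div_le_mul_sub_div {a b : ℝ} (ha : 0 ≤ a) (hb : 0 < b) :
    a * log (a / b) ≤ a * (a - b) / b := by
  obtain rfl | ha := ha.eq_or_lt
  · simp
  calc a * log (a / b) ≤ a * (a / b - 1) :=
        mul_le_mul_of_nonneg_left (log_le_sub_one_of_pos (div_pos ha hb)) ha.le
    _ = a * (a - b) / b := by field_simp

lemma bernoulli_kl_le_chiSq {a b : ℝ} (ha₀ : 0 ≤ a) (ha₁ : a ≤ 1) (hb₀ : 0 < b) (hb₁ : b < 1) :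
    a * log (a / b) + (1 - a) * log ((1 - a) / (1 - b)) ≤ (a - b) ^ 2 / (b * (1 - b)) := by
  have hb₁' : 0 < 1 - b := sub_pos.2 hb₁
  calc a * log (a / b) + (1 - a) * log ((1 - a) / (1 - b))
      ≤ a * (a - b) / b + (1 - a) * ((1 - a) - (1 - b)) / (1 - b) :=
        add_le_add (mul_log_div_le_mul_sub_div ha₀ hb₀)
          (mul_log_div_le_mul_sub_div (sub_nonneg.2 ha₁) hb₁')
    _ = (a - b) ^ 2 / (b * (1 - b)) := by field_simp; ring

lemma one_eighth_le_mul_one_sub {b : ℝ} (h₀ : 1 / 4 ≤ b) (h₁ : b ≤ 3 / 4) :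
    1 / 8 ≤ b * (1 - b) := by
  nlinarith

/-- Lemma 5: the Kullback–Leibler divergence
`KL(Ber(1/2−p) ‖ Ber(1/2−q)) = a·log(a/b) + (1−a)·log((1−a)/(1−b))` (with `a = 1/2 − p`,
`b = 1/2 − q`) between Bernoulli distributions with parameters `1/2 − p` and `1/2 − q`
satisfies `KL ≤ 8·(p − q)²` whenever `|p| ≤ 1/4` and `|q| ≤ 1/4`. -/
theorem stmt_14 (p q : ℝ) (hp : |p| ≤ 1 / 4) (hq : |q| ≤ 1 / 4) :
    (1 / 2 - p) * Real.log ((1 / 2 - p) / (1 / 2 - q)) +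
        (1 - (1 / 2 - p)) * Real.log ((1 - (1 / 2 - p)) / (1 - (1 / 2 - q))) ≤
      8 * (p - q) ^ 2 := by
  obtain ⟨hp₀, hp₁⟩ := abs_le.1 hp
  obtain ⟨hq₀, hq₁⟩ := abs_le.1 hq
  have hvar : 1 / 8 ≤ (1 / 2 - q) * (1 - (1 / 2 - q)) :=
    one_eighth_le_mul_one_sub (by linarith) (by linarith)
  calc _ ≤ ((1 / 2 - p) - (1 / 2 - q)) ^ 2 / ((1 / 2 - q) * (1 - (1 / 2 - q))) :=
        bernoulli_kl_le_chiSq (by linarith) (by linarith) (by linarith) (by linarith)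
    _ ≤ (p - q) ^ 2 / (1 / 8) := by
        rw [show (1 / 2 - p) - (1 / 2 - q) = -(p - q) by ring, neg_sq]
        gcongr
    _ = 8 * (p - q) ^ 2 := by ring
end

section
/- (Hellinger distance bound for mixtures, verification of the first condition in the MLE concentration lemma) Let θ ∈ (0,1/2], let p₁, p₀ be probability densities on ℝ^d, for t ∈ [0,1] let f_t = t·p₁ + (1−t)·p₀, and let q ∈ [θ,1−θ] and h ∈ ℝ with q + h ∈ [0,1]. Then the squared Hellinger distance satisfies H²(f_q, f_{q+h}) ≤ h²·V(p₁,p₀)/(q(1−q)) ≤ h²/(θ(1−θ)). -/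
/-!
Pointwise, `(√u - √v)² ≤ (u - v)²/u`, and for `u = q a + (1 - q) b`, `v = u - h (a - b)` one has
`(a - b)²/u ≤ (a - min a b)/q + (b - min a b)/(1 - q)`, since the larger of `a, b` enters `u` with
weight `q` or `1 - q`. Both `p₁ - min p₁ p₀` and `p₀ - min p₁ p₀` integrate to `V(p₁, p₀)`, and
`1/q + 1/(1 - q) = 1/(q (1 - q))`. The second inequality is `V ≤ 1` together with
`q (1 - q) - θ (1 - θ) = (q - θ) (1 - θ - q) ≥ 0`.
-/

open MeasureTheory

noncomputable section

/-- Total variation distance between densities: `V(p,p') = 1 − ∫ min(p,p')`. -/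
def TV (d : ℕ) (p p' : (Fin d → ℝ) → ℝ) : ℝ :=
  1 - ∫ x, min (p x) (p' x)

/-- Squared Hellinger distance between densities: `H²(p,p') = ∫ (√p − √p')²`. -/
def Hsq (d : ℕ) (p p' : (Fin d → ℝ) → ℝ) : ℝ :=
  ∫ x, (Real.sqrt (p x) - Real.sqrt (p' x)) ^ 2

lemma sq_sqrt_sub_sqrt_mul_le {u v : ℝ} (hu : 0 ≤ u) (hv : 0 ≤ v) :
    (√u - √v) ^ 2 * u ≤ (u - v) ^ 2 := by
  have hu_le : u ≤ (√u + √v) ^ 2 := by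
    nlinarith [Real.sq_sqrt hu, Real.sqrt_nonneg u, Real.sqrt_nonneg v]
  calc (√u - √v) ^ 2 * u ≤ (√u - √v) ^ 2 * (√u + √v) ^ 2 := by gcongr
    _ = (√u ^ 2 - √v ^ 2) ^ 2 := by ring
    _ = (u - v) ^ 2 := by rw [Real.sq_sqrt hu, Real.sq_sqrt hv]

lemma sq_sub_le_mul_mixture {a b q : ℝ} (ha : 0 ≤ a) (hb : 0 ≤ b) (hq0 : 0 < q) (hq1 : q < 1) :
    (a - b) ^ 2 ≤ ((a - min a b) / q + (b - min a b) / (1 - q)) * (q * a + (1 - q) * b) := by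
  rcases le_total b a with hba | hab
  · rw [min_eq_right hba, sub_self, zero_div, add_zero, div_mul_eq_mul_div, le_div_iff₀ hq0]
    nlinarith [mul_nonneg (sub_nonneg.2 hba) hb]
  · rw [min_eq_left hab, sub_self, zero_div, zero_add, div_mul_eq_mul_div,
      le_div_iff₀ (sub_pos.2 hq1)]
    nlinarith [mul_nonneg (sub_nonneg.2 hab) ha]

lemma sq_sqrt_mixture_sub_sqrt_mixture_le {a b q h : ℝ} (ha : 0 ≤ a) (hb : 0 ≤ b)
    (hq0 : 0 < q) (hq1 : q < 1) (hqh0 : 0 ≤ q + h) (hqh1 : q + h ≤ 1) :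
    (√(q * a + (1 - q) * b) - √((q + h) * a + (1 - (q + h)) * b)) ^ 2 ≤
      h ^ 2 * ((a - min a b) / q + (b - min a b) / (1 - q)) := by
  set u := q * a + (1 - q) * b
  set v := (q + h) * a + (1 - (q + h)) * b
  have hqa : 0 ≤ q * a := mul_nonneg hq0.le ha
  have hqb : 0 ≤ (1 - q) * b := mul_nonneg (sub_pos.2 hq1).le hb
  have hv : 0 ≤ v := add_nonneg (mul_nonneg hqh0 ha) (mul_nonneg (sub_nonneg.2 hqh1) hb)
  rcases (add_nonneg hqa hqb).eq_or_lt with hu | hu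
  · obtain ⟨hqa0, hqb0⟩ := (add_eq_zero_iff_of_nonneg hqa hqb).1 hu.symm
    obtain rfl : a = 0 := (mul_eq_zero.1 hqa0).resolve_left hq0.ne'
    obtain rfl : b = 0 := (mul_eq_zero.1 hqb0).resolve_left (sub_pos.2 hq1).ne'
    simp [u, v]
  · refine le_of_mul_le_mul_right ?_ hu
    calc (√u - √v) ^ 2 * u ≤ (u - v) ^ 2 := sq_sqrt_sub_sqrt_mul_le hu.le hv
      _ = h ^ 2 * (a - b) ^ 2 := by ring
      _ ≤ h ^ 2 * ((a - min a b) / q + (b - min a b) / (1 - q)) * u := by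
        rw [mul_assoc]
        exact mul_le_mul_of_nonneg_left (sq_sub_le_mul_mixture ha hb hq0 hq1) (sq_nonneg h)

lemma TV_comm (d : ℕ) (p p' : (Fin d → ℝ) → ℝ) : TV d p p' = TV d p' p := by
  simp_rw [TV, min_comm]

lemma TV_le_one {d : ℕ} {p₁ p₀ : (Fin d → ℝ) → ℝ} (h₁nn : ∀ x, 0 ≤ p₁ x)
    (h₀nn : ∀ x, 0 ≤ p₀ x) : TV d p₁ p₀ ≤ 1 :=
  sub_le_self _ (integral_nonneg fun x => le_min (h₁nn x) (h₀nn x))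

lemma integral_sub_min_eq_TV {d : ℕ} {p p' : (Fin d → ℝ) → ℝ} (hpi : Integrable p)
    (hp'i : Integrable p') (hp : ∫ x, p x = 1) : ∫ x, (p x - min (p x) (p' x)) = TV d p p' := by
  have hmin : Integrable fun x => min (p x) (p' x) := hpi.inf hp'i
  rw [integral_sub hpi hmin, hp, TV]

lemma Hsq_mixture_le {d : ℕ} {p₁ p₀ : (Fin d → ℝ) → ℝ}
    (h₁nn : ∀ x, 0 ≤ p₁ x) (h₁int : ∫ x, p₁ x = 1)
    (h₀nn : ∀ x, 0 ≤ p₀ x) (h₀int : ∫ x, p₀ x = 1)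
    {q h : ℝ} (hq0 : 0 < q) (hq1 : q < 1) (hqh0 : 0 ≤ q + h) (hqh1 : q + h ≤ 1) :
    Hsq d (fun x => q * p₁ x + (1 - q) * p₀ x)
        (fun x => (q + h) * p₁ x + (1 - (q + h)) * p₀ x) ≤
      h ^ 2 * TV d p₁ p₀ / (q * (1 - q)) := by
  have hint₁ : Integrable p₁ := .of_integral_ne_zero (by simp [h₁int])
  have hint₀ : Integrable p₀ := .of_integral_ne_zero (by simp [h₀int])
  have hmin : Integrable fun x => min (p₁ x) (p₀ x) := hint₁.inf hint₀
  have hsub₁ : Integrable fun x => (p₁ x - min (p₁ x) (p₀ x)) / q := (hint₁.sub hmin).div_const q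
  have hsub₀ : Integrable fun x => (p₀ x - min (p₁ x) (p₀ x)) / (1 - q) :=
    (hint₀.sub hmin).div_const (1 - q)
  calc Hsq d _ _ ≤ ∫ x,
        h ^ 2 * ((p₁ x - min (p₁ x) (p₀ x)) / q + (p₀ x - min (p₁ x) (p₀ x)) / (1 - q)) :=
        integral_mono_of_nonneg (.of_forall fun x => sq_nonneg _) ((hsub₁.add hsub₀).const_mul _)
          (.of_forall fun x =>
            sq_sqrt_mixture_sub_sqrt_mixture_le (h₁nn x) (h₀nn x) hq0 hq1 hqh0 hqh1)
    _ = h ^ 2 * (TV d p₁ p₀ / q + TV d p₁ p₀ / (1 - q)) := by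
      have h₀sub : ∫ x, (p₀ x - min (p₁ x) (p₀ x)) = TV d p₁ p₀ := by
        simp_rw [min_comm (p₁ _), TV_comm d p₁]
        exact integral_sub_min_eq_TV hint₀ hint₁ h₀int
      rw [integral_const_mul, integral_add hsub₁ hsub₀, integral_div, integral_div,
        integral_sub_min_eq_TV hint₁ hint₀ h₁int, h₀sub]
    _ = h ^ 2 * TV d p₁ p₀ / (q * (1 - q)) := by
      field_simp [(sub_pos.2 hq1).ne']
      ring

theorem stmt_17_general (d : ℕ) (θ : ℝ) (hθ : θ ∈ Set.Ioc (0 : ℝ) (1 / 2))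
    (p₁ p₀ : (Fin d → ℝ) → ℝ)
    (h₁nn : ∀ x, 0 ≤ p₁ x) (h₁int : ∫ x, p₁ x = 1)
    (h₀nn : ∀ x, 0 ≤ p₀ x) (h₀int : ∫ x, p₀ x = 1)
    (q h : ℝ) (hq : q ∈ Set.Icc θ (1 - θ)) (hqh : q + h ∈ Set.Icc (0 : ℝ) 1) :
    Hsq d (fun x => q * p₁ x + (1 - q) * p₀ x)
        (fun x => (q + h) * p₁ x + (1 - (q + h)) * p₀ x) ≤
        h ^ 2 * TV d p₁ p₀ / (q * (1 - q)) ∧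
      h ^ 2 * TV d p₁ p₀ / (q * (1 - q)) ≤ h ^ 2 / (θ * (1 - θ)) := by
  obtain ⟨hθ0, hθ2⟩ := hθ
  obtain ⟨hθq, hq1θ⟩ := hq
  have hq0 : 0 < q := hθ0.trans_le hθq
  have hq1 : q < 1 := by linarith
  refine ⟨Hsq_mixture_le h₁nn h₁int h₀nn h₀int hq0 hq1 hqh.1 hqh.2, ?_⟩
  have hvar : θ * (1 - θ) ≤ q * (1 - q) := by nlinarith
  have hTV : h ^ 2 * TV d p₁ p₀ ≤ h ^ 2 :=
    mul_le_of_le_one_right (sq_nonneg h) (TV_le_one h₁nn h₀nn)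
  exact div_le_div₀ (sq_nonneg h) hTV (by nlinarith) hvar

/-- Hellinger distance bound for two-component mixtures:
`H²(f_q, f_{q+h}) ≤ h²·V(p₁,p₀)/(q(1−q)) ≤ h²/(θ(1−θ))`. -/
theorem stmt_17 (d : ℕ) (hd : 1 ≤ d) (θ : ℝ) (hθ : θ ∈ Set.Ioc (0 : ℝ) (1 / 2))
    (p₁ p₀ : (Fin d → ℝ) → ℝ)
    (h₁m : Measurable p₁) (h₁nn : ∀ x, 0 ≤ p₁ x) (h₁int : ∫ x, p₁ x = 1)
    (h₀m : Measurable p₀) (h₀nn : ∀ x, 0 ≤ p₀ x) (h₀int : ∫ x, p₀ x = 1)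
    (q h : ℝ) (hq : q ∈ Set.Icc θ (1 - θ)) (hqh : q + h ∈ Set.Icc (0 : ℝ) 1) :
    Hsq d (fun x => q * p₁ x + (1 - q) * p₀ x)
        (fun x => (q + h) * p₁ x + (1 - (q + h)) * p₀ x) ≤
        h ^ 2 * TV d p₁ p₀ / (q * (1 - q)) ∧
      h ^ 2 * TV d p₁ p₀ / (q * (1 - q)) ≤ h ^ 2 / (θ * (1 - θ)) :=
  stmt_17_general d θ hθ p₁ p₀ h₁nn h₁int h₀nn h₀int q h hq hqh
end
end

section
/- (Fisher information versus total variation inequality) Let p₁, p₀ be probability densities on ℝ^d and q ∈ (0,1), and let f_q = q·p₁ + (1−q)·p₀. Then ∫_{f_q > 0} (p₁(x) − p₀(x))²/f_q(x) dx ≤ V(p₁,p₀)/(q(1−q)). Equivalently, the reciprocal of the Fisher information for estimating q from unlabeled data is at least q(1−q)/V(p₁,p₀), the reciprocal Fisher information from labeled data divided by V(p₁,p₀). -/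
/-!
Pointwise, `(a - b)² / (q a + (1 - q) b) ≤ (max a b - (q a + (1 - q) b)) / (q (1 - q))` for `a, b ≥ 0`:
if `a ≥ b` the right-hand numerator is `(1 - q)(a - b)`, and the inequality reduces to
`q (a - b) ≤ q a + (1 - q) b`. Integrating, `∫ max p₁ p₀ = 2 - ∫ min p₁ p₀` and `∫ f_q = 1`,
so the right-hand side integrates to exactly `V(p₁, p₀) / (q (1 - q))`. The pointwise bound also
holds where `q a + (1 - q) b = 0` (then `a = b = 0`), so the restriction to `{f_q > 0}` costs nothing.
-/

open MeasureTheory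

noncomputable section

lemma sq_sub_div_le_max_sub_div {a b q : ℝ} (ha : 0 ≤ a) (hb : 0 ≤ b) (hq₀ : 0 < q) (hq₁ : q < 1) :
    (a - b) ^ 2 / (q * a + (1 - q) * b) ≤ (max a b - (q * a + (1 - q) * b)) / (q * (1 - q)) := by
  have hq₁' : 0 < 1 - q := sub_pos.2 hq₁
  have hqa : 0 ≤ q * a := mul_nonneg hq₀.le ha
  have hqb : 0 ≤ (1 - q) * b := mul_nonneg hq₁'.le hb
  rcases (add_nonneg hqa hqb).eq_or_lt with hf | hf
  · have ha₀ : a = 0 := by nlinarith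
    have hb₀ : b = 0 := by nlinarith
    simp [ha₀, hb₀]
  have hq : 0 < q * (1 - q) := mul_pos hq₀ hq₁'
  rw [div_le_div_iff₀ hf hq]
  rcases le_total b a with hab | hab
  · rw [max_eq_left hab]
    nlinarith [mul_nonneg (mul_nonneg hq₁'.le (sub_nonneg.2 hab)) hb]
  · rw [max_eq_right hab]
    nlinarith [mul_nonneg (mul_nonneg hq₀.le (sub_nonneg.2 hab)) ha]

lemma integral_max_eq {α : Type*} [MeasurableSpace α] {μ : Measure α} {f g : α → ℝ}
    (hf : Integrable f μ) (hg : Integrable g μ) :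
    ∫ x, max (f x) (g x) ∂μ = ∫ x, f x ∂μ + ∫ x, g x ∂μ - ∫ x, min (f x) (g x) ∂μ := by
  have hmin : Integrable (fun x => min (f x) (g x)) μ := hf.inf hg
  have hmax : Integrable (fun x => max (f x) (g x)) μ := hf.sup hg
  have h := integral_add hmin hmax
  simp only [min_add_max] at h
  rw [integral_add hf hg] at h
  linarith

theorem stmt_18_general (d : ℕ) (p₁ p₀ : (Fin d → ℝ) → ℝ)
    (h₁nn : ∀ x, 0 ≤ p₁ x) (h₁int : ∫ x, p₁ x = 1)
    (h₀nn : ∀ x, 0 ≤ p₀ x) (h₀int : ∫ x, p₀ x = 1)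
    (q : ℝ) (hq : q ∈ Set.Ioo (0 : ℝ) 1) :
    (∫ x in {x | 0 < q * p₁ x + (1 - q) * p₀ x},
        (p₁ x - p₀ x) ^ 2 / (q * p₁ x + (1 - q) * p₀ x)) ≤
      TV d p₁ p₀ / (q * (1 - q)) := by
  obtain ⟨hq₀, hq₁⟩ := hq
  have h₁i : Integrable p₁ := .of_integral_ne_zero (by simp [h₁int])
  have h₀i : Integrable p₀ := .of_integral_ne_zero (by simp [h₀int])
  set f := fun x => q * p₁ x + (1 - q) * p₀ x
  have hfi : Integrable f := (h₁i.const_mul q).add (h₀i.const_mul (1 - q))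
  have hf : ∫ x, f x = 1 := by
    rw [integral_add (h₁i.const_mul q) (h₀i.const_mul (1 - q)), integral_const_mul,
      integral_const_mul, h₁int, h₀int]
    ring
  have hpt (x) := sq_sub_div_le_max_sub_div (h₁nn x) (h₀nn x) hq₀ hq₁
  have hlhs_nn (x) : 0 ≤ (p₁ x - p₀ x) ^ 2 / f x :=
    div_nonneg (sq_nonneg _)
      (add_nonneg (mul_nonneg hq₀.le (h₁nn x)) (mul_nonneg (sub_pos.2 hq₁).le (h₀nn x)))
  have hmax : Integrable fun x => max (p₁ x) (p₀ x) := h₁i.sup h₀i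
  have hrhs_i : Integrable fun x => (max (p₁ x) (p₀ x) - f x) / (q * (1 - q)) :=
    (hmax.sub hfi).div_const _
  -- the left integrand is nonnegative, so its integrability is not needed
  calc _ ≤ ∫ x in {x | 0 < f x}, (max (p₁ x) (p₀ x) - f x) / (q * (1 - q)) :=
        integral_mono_of_nonneg (.of_forall hlhs_nn) hrhs_i.restrict (.of_forall hpt)
    _ ≤ ∫ x, (max (p₁ x) (p₀ x) - f x) / (q * (1 - q)) :=
        setIntegral_le_integral hrhs_i (.of_forall fun x => (hlhs_nn x).trans (hpt x))
    _ = TV d p₁ p₀ / (q * (1 - q)) := by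
        rw [integral_div, integral_sub hmax hfi, integral_max_eq h₁i h₀i, hf, h₁int, h₀int,
          TV]
        ring

/-- Fisher information versus total variation: with `f_q = q·p₁ + (1−q)·p₀`,
`∫_{f_q>0} (p₁−p₀)²/f_q ≤ V(p₁,p₀)/(q(1−q))`. -/
theorem stmt_18 (d : ℕ) (hd : 1 ≤ d) (p₁ p₀ : (Fin d → ℝ) → ℝ)
    (h₁m : Measurable p₁) (h₁nn : ∀ x, 0 ≤ p₁ x) (h₁int : ∫ x, p₁ x = 1)
    (h₀m : Measurable p₀) (h₀nn : ∀ x, 0 ≤ p₀ x) (h₀int : ∫ x, p₀ x = 1)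
    (q : ℝ) (hq : q ∈ Set.Ioo (0 : ℝ) 1) :
    (∫ x in {x | 0 < q * p₁ x + (1 - q) * p₀ x},
        (p₁ x - p₀ x) ^ 2 / (q * p₁ x + (1 - q) * p₀ x)) ≤
      TV d p₁ p₀ / (q * (1 - q)) :=
  stmt_18_general d p₁ p₀ h₁nn h₁int h₀nn h₀int q hq
end
end
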